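/- arXiv:1009.5051 — 8 statements merged into one kernel-verified Lean document; each statement's English description precedes it below -/
import Mathlib

section
/- In the group G = ℤ × C₂ presented as ⟨t, c | c² = t², ct = tc⟩ with symmetric generating set {t, t⁻¹, c, c⁻¹}, for every n ≥ 1 every word x₁x₂…x_n with each x_i ∈ {tt, cc} (a concatenation of n blocks, each block being tt or cc) is a geodesic word of length 2n representing t^{2n}; hence there are at least 2ⁿ geodesic words of length 2n, and the geodesic growth of G with respect to this generating set is exponential. -/
/-- A word `w` over the alphabet `X ⊆ G` is geodesic if its letters lie in `X` and no
shorter word over `X` represents the same element of `G`. -/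
def IsGeodesicWord {G : Type*} [Group G] (X : Set G) (w : List G) : Prop :=
  (∀ a ∈ w, a ∈ X) ∧
    ∀ w' : List G, (∀ a ∈ w', a ∈ X) → w'.prod = w.prod → w.length ≤ w'.length

/-- The geodesic growth function: the number of geodesic words over `X` of length at most `n`. -/
noncomputable def geodesicGrowth {G : Type*} [Group G] (X : Set G) (n : ℕ) : ℕ :=
  Set.ncard {w : List G | IsGeodesicWord X w ∧ w.length ≤ n}

/-- The word growth function: the number of elements of `G` represented by some word over `X`
of length at most `n`. -/
noncomputable def wordGrowth {G : Type*} [Group G] (X : Set G) (n : ℕ) : ℕ :=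
  Set.ncard {g : G | ∃ w : List G, (∀ a ∈ w, a ∈ X) ∧ w.prod = g ∧ w.length ≤ n}

/-- The group ℤ × C₂, generated by t = (1,0) and c = (1,1) (so c² = t², ct = tc, c ∉ ⟨t⟩). -/
abbrev GZC2' : Type := Multiplicative (ℤ × ZMod 2)

def tG : GZC2' := Multiplicative.ofAdd ((1 : ℤ), (0 : ZMod 2))

def cG : GZC2' := Multiplicative.ofAdd ((1 : ℤ), (1 : ZMod 2))

namespace DGE

/-- the ℤ-coordinate -/
def z (g : GZC2') : ℤ := (Multiplicative.toAdd g).1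

lemma z_mul (a b : GZC2') : z (a * b) = z a + z b := rfl

lemma z_one : z 1 = 0 := rfl

lemma z_tG : z tG = 1 := rfl
lemma z_cG : z cG = 1 := rfl

lemma tG_ne_cG : tG ≠ cG := by
  intro h
  have : ((0 : ZMod 2)) = 1 := congrArg (fun g => (Multiplicative.toAdd g).2) h
  exact absurd this (by decide)

abbrev X : Set GZC2' := {tG, tG⁻¹, cG, cG⁻¹}

lemma abs_z_of_mem {a : GZC2'} (ha : a ∈ X) : |z a| = 1 := by
  rcases ha with h | h | h | h <;> subst h <;> rfl

lemma abs_z_prod_le (w : List GZC2') (hw : ∀ a ∈ w, a ∈ X) :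
    |z w.prod| ≤ (w.length : ℤ) := by
  induction w with
  | nil => simp [z_one]
  | cons a w ih =>
    have h1 : |z a| = 1 := abs_z_of_mem (hw a (by simp))
    have h2 := ih (fun b hb => hw b (by simp [hb]))
    calc |z (a * w.prod)| ≤ |z a| + |z w.prod| := by rw [z_mul]; exact abs_add_le _ _
    _ ≤ 1 + w.length := by omega
    _ = ((a :: w).length : ℤ) := by simp; omega

lemma z_prod_pos (w : List GZC2') (hw : ∀ a ∈ w, a ∈ ({tG, cG} : Set GZC2')) :
    z w.prod = w.length := by
  induction w with
  | nil => simp [z_one]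
  | cons a w ih =>
    have h1 : z a = 1 := by
      rcases hw a (by simp) with h | h <;> subst h <;> rfl
    rw [List.prod_cons, z_mul, h1, ih (fun b hb => hw b (by simp [hb]))]
    simp; omega

lemma mem_X_of_pos {a : GZC2'} (ha : a ∈ ({tG, cG} : Set GZC2')) : a ∈ X := by
  rcases ha with h | h <;> subst h <;> simp [X]

lemma geodesic_of_pos (w : List GZC2') (hw : ∀ a ∈ w, a ∈ ({tG, cG} : Set GZC2')) :
    IsGeodesicWord X w := by
  refine ⟨fun a ha => mem_X_of_pos (hw a ha), fun w' hw' hprod => ?_⟩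
  have h1 := abs_z_prod_le w' hw'
  have h2 := z_prod_pos w hw
  rw [hprod, h2] at h1
  have : (w.length : ℤ) ≤ w'.length := le_trans (le_abs_self _) h1
  exact_mod_cast this

/-- finiteness of sets of bounded-length words over a finite alphabet -/
lemma finite_words {α : Type*} (X : Set α) (hX : X.Finite) (n : ℕ) :
    {w : List α | (∀ a ∈ w, a ∈ X) ∧ w.length ≤ n}.Finite := by
  induction n with
  | zero =>
    apply Set.Finite.subset (Set.finite_singleton ([] : List α))
    rintro w ⟨-, hl⟩
    simp at hl ⊢
    exact hl
  | succ n ih =>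
    apply Set.Finite.subset
      (Set.Finite.union (Set.finite_singleton ([] : List α))
        (Set.Finite.image (fun p : α × List α => p.1 :: p.2) (hX.prod ih)))
    rintro w ⟨hmem, hl⟩
    cases w with
    | nil => exact Or.inl rfl
    | cons a w =>
      refine Or.inr ⟨(a, w), ⟨hmem a (by simp), fun b hb => hmem b (by simp [hb]), ?_⟩, rfl⟩
      simpa using hl

end DGE

theorem doubled_generator_exponential (n : ℕ) (hn : 1 ≤ n) :
    (∀ f : Fin n → Bool,
      IsGeodesicWord {tG, tG⁻¹, cG, cG⁻¹}
        ((List.ofFn fun i => if f i then [tG, tG] else [cG, cG]).flatten) ∧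
      ((List.ofFn fun i => if f i then [tG, tG] else [cG, cG]).flatten).length = 2 * n ∧
      ((List.ofFn fun i => if f i then [tG, tG] else [cG, cG]).flatten).prod = tG ^ (2 * n)) ∧
    2 ^ n ≤ Set.ncard
      {w : List GZC2' | IsGeodesicWord {tG, tG⁻¹, cG, cG⁻¹} w ∧ w.length = 2 * n} ∧
    ∃ b : ℝ, 1 < b ∧ ∀ m : ℕ,
      b ^ m ≤ (geodesicGrowth ({tG, tG⁻¹, cG, cG⁻¹} : Set GZC2') m : ℝ) := by
  have hXfin : (DGE.X : Set GZC2').Finite := by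
    apply Set.Finite.insert; apply Set.Finite.insert; apply Set.Finite.insert
    exact Set.finite_singleton _
  have hmemflat : ∀ (f : Fin n → Bool) (a : GZC2'),
      a ∈ (List.ofFn fun i => if f i then [tG, tG] else [cG, cG]).flatten →
      a ∈ ({tG, cG} : Set GZC2') := by
    intro f a ha
    rw [List.mem_flatten] at ha
    obtain ⟨l, hl, hal⟩ := ha
    rw [List.mem_ofFn] at hl
    obtain ⟨i, rfl⟩ := hl
    by_cases h : f i <;> simp [h] at hal <;> rcases hal with rfl | rfl <;> simp
  refine ⟨fun f => ⟨?_, ?_, ?_⟩, ?_, ?_⟩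
  · exact DGE.geodesic_of_pos _ (hmemflat f)
  · simp [List.length_flatten, List.map_ofFn, Function.comp_def, apply_ite List.length, mul_comm]
  · rw [List.prod_flatten, List.map_ofFn]
    have : ∀ i : Fin n, ((if f i then [tG, tG] else [cG, cG]).prod) = tG ^ 2 := by
      intro i
      by_cases h : f i <;>
        simp [h, tG, cG, pow_two, ← ofAdd_add, Prod.ext_iff] <;> decide
    simp only [Function.comp_def, this, List.prod_ofFn, Finset.prod_const, Finset.card_univ,
      Fintype.card_fin, ← pow_mul, mul_comm n 2]
  · -- cardinality bound, length exactly 2n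
    set S := {w : List GZC2' | IsGeodesicWord DGE.X w ∧ w.length = 2 * n} with hS
    have hSfin : S.Finite := by
      apply Set.Finite.subset (DGE.finite_words DGE.X hXfin (2 * n))
      rintro w ⟨⟨h1, -⟩, h2⟩
      exact ⟨h1, h2.le⟩
    set F : (Fin n → Bool) → List GZC2' :=
      fun f => (List.ofFn fun i => if f i then tG else cG) ++ List.replicate n tG with hF
    have hFrange : Set.range F ⊆ S := by
      rintro w ⟨f, rfl⟩
      constructor
      · apply DGE.geodesic_of_pos
        intro a ha
        rw [hF, List.mem_append] at ha
        rcases ha with ha | ha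
        · rw [List.mem_ofFn] at ha
          obtain ⟨i, rfl⟩ := ha
          by_cases h : f i <;> simp [h]
        · rw [List.eq_of_mem_replicate ha]; simp
      · simp [hF]; omega
    have hFinj : Function.Injective F := by
      intro f g hfg
      have := List.append_cancel_right (hF ▸ hfg)
      rw [List.ofFn_inj] at this
      funext i
      have := congrFun this i
      by_cases h1 : f i <;> by_cases h2 : g i <;>
        simp [h1, h2] at this ⊢
      · exact DGE.tG_ne_cG this
      · exact DGE.tG_ne_cG this.symm
    calc (2 : ℕ) ^ n = (Set.range F).ncard := by
          rw [← Set.image_univ, Set.ncard_image_of_injective _ hFinj, Set.ncard_univ]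
          simp [Nat.card_eq_fintype_card]
    _ ≤ S.ncard := Set.ncard_le_ncard hFrange hSfin
  · refine ⟨2, one_lt_two, fun m => ?_⟩
    have key : 2 ^ m ≤ geodesicGrowth (DGE.X : Set GZC2') m := by
      set S := {w : List GZC2' | IsGeodesicWord DGE.X w ∧ w.length ≤ m} with hS
      have hSfin : S.Finite := by
        apply Set.Finite.subset (DGE.finite_words DGE.X hXfin m)
        rintro w ⟨⟨h1, -⟩, h2⟩
        exact ⟨h1, h2⟩
      set F : (Fin m → Bool) → List GZC2' :=
        fun f => List.ofFn fun i => if f i then tG else cG with hF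
      have hFrange : Set.range F ⊆ S := by
        rintro w ⟨f, rfl⟩
        constructor
        · apply DGE.geodesic_of_pos
          intro a ha
          rw [hF, List.mem_ofFn] at ha
          obtain ⟨i, rfl⟩ := ha
          by_cases h : f i <;> simp [h]
        · simp [hF]
      have hFinj : Function.Injective F := by
        intro f g hfg
        rw [hF, List.ofFn_inj] at hfg
        funext i
        have := congrFun hfg i
        by_cases h1 : f i <;> by_cases h2 : g i <;>
          simp [h1, h2] at this ⊢
        · exact DGE.tG_ne_cG this
        · exact DGE.tG_ne_cG this.symm
      calc (2 : ℕ) ^ m = (Set.range F).ncard := by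
            rw [← Set.image_univ, Set.ncard_image_of_injective _ hFinj, Set.ncard_univ]
            simp [Nat.card_eq_fintype_card]
      _ ≤ S.ncard := Set.ncard_le_ncard hFrange hSfin
    calc (2 : ℝ) ^ m = ((2 ^ m : ℕ) : ℝ) := by push_cast; ring
    _ ≤ _ := by exact_mod_cast key
end

section
/- The group ℤ² has exponential geodesic growth with respect to every finite symmetric generating set: for any finite symmetric generating set X of ℤ², there exist x_i, x_j ∈ X such that for every n, all C(2n, n) permutations of the word x_iⁿ x_jⁿ are geodesics of length 2n; hence Γ_{ℤ²,X}(2n) ≥ 2ⁿ. -/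
namespace Z2GG

open Multiplicative

abbrev G2 := Multiplicative (ℤ × ℤ)

/-- integer linear functional -/
def lin (A B : ℤ) (g : G2) : ℤ := A * (toAdd g).1 + B * (toAdd g).2

lemma lin_one (A B : ℤ) : lin A B 1 = 0 := by simp [lin]

lemma lin_mul (A B : ℤ) (g h : G2) : lin A B (g * h) = lin A B g + lin A B h := by
  simp only [lin, toAdd_mul, Prod.fst_add, Prod.snd_add]; ring

lemma lin_inv (A B : ℤ) (g : G2) : lin A B g⁻¹ = - lin A B g := by
  simp only [lin, toAdd_inv, Prod.fst_neg, Prod.snd_neg]; ring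

lemma lin_pow (A B : ℤ) (g : G2) (n : ℕ) : lin A B (g ^ n) = n * lin A B g := by
  induction n with
  | zero => simp [lin_one]
  | succ k ih => rw [pow_succ, lin_mul, ih]; push_cast; ring

lemma lin_prod_le (A B M : ℤ) (l : List G2) (h : ∀ a ∈ l, lin A B a ≤ M) :
    lin A B l.prod ≤ l.length * M := by
  induction l with
  | nil => simp [lin_one]
  | cons a t ih =>
    have h1 := h a (by simp)
    have h2 := ih (fun b hb => h b (by simp [hb]))
    rw [List.prod_cons, lin_mul, List.length_cons]
    push_cast
    linarith

lemma exists_nonzero_lin (X : Finset G2)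
    (hgen : Subgroup.closure (X : Set G2) = ⊤) (A B : ℤ) (hAB : ¬(A = 0 ∧ B = 0))
    (h0 : ∀ z ∈ X, lin A B z = 0) : False := by
  set K : Subgroup G2 :=
    { carrier := {g | lin A B g = 0}
      one_mem' := lin_one A B
      mul_mem' := by
        intro a b ha hb
        simp only [Set.mem_setOf_eq] at *
        rw [lin_mul, ha, hb]; ring
      inv_mem' := by
        intro a ha
        simp only [Set.mem_setOf_eq] at *
        rw [lin_inv, ha]; ring } with hK
  have hle : Subgroup.closure (X : Set G2) ≤ K :=
    (Subgroup.closure_le K).2 (fun z hz => h0 z hz)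
  rw [hgen] at hle
  have hmem : lin A B (ofAdd (A, B)) = 0 := hle (Subgroup.mem_top _)
  simp only [lin, toAdd_ofAdd] at hmem
  exact hAB ⟨by nlinarith, by nlinarith⟩

/-- Main geometric lemma: there is an "edge" of the convex hull of `X`, i.e. two distinct
elements of `X` on which some integer linear functional attains its maximum over `X`,
this maximum being positive. -/
lemma exists_edge (X : Finset G2)
    (hsym : ∀ g ∈ X, g⁻¹ ∈ X)
    (hgen : Subgroup.closure (X : Set G2) = ⊤) :
    ∃ x ∈ X, ∃ y ∈ X, x ≠ y ∧ ∃ A B M : ℤ, 0 < M ∧ lin A B x = M ∧ lin A B y = M ∧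
      ∀ z ∈ X, lin A B z ≤ M := by
  -- X is nonempty
  have hne : X.Nonempty := by
    rcases X.eq_empty_or_nonempty with h | h
    · exfalso
      rw [h] at hgen
      simp only [Finset.coe_empty, Subgroup.closure_empty] at hgen
      have : (ofAdd ((1 : ℤ), (0 : ℤ))) ∈ (⊥ : Subgroup G2) := by rw [hgen]; trivial
      rw [Subgroup.mem_bot] at this
      have := congrArg (fun g => (toAdd g).1) this
      simp at this
    · exact h
  -- size bound and generic direction N
  set B0 : ℕ := X.sup (fun g => (toAdd g).2.natAbs) with hB0
  set N : ℤ := 2 * (B0 : ℤ) + 1 with hN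
  have hNpos : 0 < N := by positivity
  have hcoord : ∀ z ∈ X, |(toAdd z).2| ≤ (B0 : ℤ) := by
    intro z hz
    have : (toAdd z).2.natAbs ≤ B0 := Finset.le_sup (f := fun g => (toAdd g).2.natAbs) hz
    rw [Int.abs_eq_natAbs]
    exact_mod_cast this
  -- the vertex x : unique maximizer of lin N 1
  obtain ⟨x, hxX, hxmax⟩ := X.exists_max_image (fun g => lin N 1 g) hne
  have huniq : ∀ z ∈ X, lin N 1 z = lin N 1 x → z = x := by
    intro z hz hlin
    have h2z := hcoord z hz
    have h2x := hcoord x hxX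
    simp only [lin, one_mul] at hlin
    have heq : N * ((toAdd z).1 - (toAdd x).1) = (toAdd x).2 - (toAdd z).2 := by
      linear_combination hlin
    have h1 : (toAdd z).1 = (toAdd x).1 := by
      by_contra hne1
      have hd : (1 : ℤ) ≤ |(toAdd z).1 - (toAdd x).1| :=
        Int.one_le_abs (sub_ne_zero.2 hne1)
      have hub : |(toAdd x).2 - (toAdd z).2| ≤ 2 * (B0 : ℤ) := by
        calc |(toAdd x).2 - (toAdd z).2| ≤ |(toAdd x).2| + |(toAdd z).2| := abs_sub _ _
          _ ≤ 2 * (B0 : ℤ) := by linarith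
      have hlb : N ≤ |N * ((toAdd z).1 - (toAdd x).1)| := by
        rw [abs_mul, abs_of_pos hNpos]
        nlinarith
      rw [heq] at hlb
      linarith
    have h2 : (toAdd z).2 = (toAdd x).2 := by
      rw [h1] at hlin; linarith
    have : toAdd z = toAdd x := Prod.ext h1 h2
    exact toAdd.injective this
  -- positivity of the max
  have hxpos : 0 < lin N 1 x := by
    have h1 : lin N 1 x⁻¹ ≤ lin N 1 x := hxmax _ (hsym x hxX)
    rw [lin_inv] at h1
    rcases lt_or_eq_of_le (by linarith : (0:ℤ) ≤ lin N 1 x) with h | h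
    · exact h
    · exfalso
      apply exists_nonzero_lin X hgen N 1 (by simp)
      intro z hz
      have hz1 := hxmax z hz
      have hz2 := hxmax z⁻¹ (hsym z hz)
      rw [lin_inv] at hz2
      omega
  -- a second direction not parallel to (N, 1) with a point beating x
  have hdir : ∃ a b : ℤ, a - b * N ≠ 0 ∧ ∃ z ∈ X, lin a b x < lin a b z := by
    by_cases h₁ : ∃ z ∈ X, lin 1 (-N) x < lin 1 (-N) z
    · exact ⟨1, -N, by nlinarith, h₁⟩
    by_cases h₂ : ∃ z ∈ X, lin (-1) N x < lin (-1) N z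
    · exact ⟨-1, N, by nlinarith, h₂⟩
    exfalso
    push_neg at h₁ h₂
    have hneg : ∀ g : G2, lin (-1) N g = - lin 1 (-N) g := by
      intro g; simp only [lin]; ring
    have hzero : ∀ z ∈ X, lin 1 (-N) z = lin 1 (-N) x := by
      intro z hz
      have ha := h₁ z hz
      have hb := h₂ z hz
      rw [hneg, hneg] at hb
      linarith
    have hx0 : lin 1 (-N) x = 0 := by
      have := hzero x⁻¹ (hsym x hxX)
      rw [lin_inv] at this
      linarith
    apply exists_nonzero_lin X hgen 1 (-N) (by simp)
    intro z hz
    rw [hzero z hz, hx0]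
  obtain ⟨a, b, hab, z₀, hz₀X, hz₀⟩ := hdir
  -- minimize the ratio over the candidate set
  set C : Finset G2 := X.filter (fun z => lin a b x < lin a b z) with hC
  have hCne : C.Nonempty := ⟨z₀, Finset.mem_filter.2 ⟨hz₀X, hz₀⟩⟩
  obtain ⟨y, hyC, hymin⟩ := C.exists_min_image
    (fun z => ((lin N 1 x - lin N 1 z : ℤ) : ℚ) / ((lin a b z - lin a b x : ℤ) : ℚ)) hCne
  have hyX : y ∈ X := (Finset.mem_filter.1 hyC).1
  have hyψ : lin a b x < lin a b y := (Finset.mem_filter.1 hyC).2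
  have hyx : y ≠ x := by intro h; rw [h] at hyψ; exact lt_irrefl _ hyψ
  set p : ℤ := lin N 1 x - lin N 1 y with hp
  set q : ℤ := lin a b y - lin a b x with hq
  have hppos : 0 < p := by
    have h1 : lin N 1 y ≤ lin N 1 x := hxmax y hyX
    rcases lt_or_eq_of_le h1 with h | h
    · omega
    · exact absurd (huniq y hyX h) hyx
  have hqpos : 0 < q := by omega
  -- the supporting functional
  set A : ℤ := q * N + p * a with hA
  set B : ℤ := q * 1 + p * b with hB
  have hlinAB : ∀ g : G2, lin A B g = q * lin N 1 g + p * lin a b g := by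
    intro g; simp only [lin, hA, hB]; ring
  have hMxy : lin A B y = lin A B x := by
    rw [hlinAB, hlinAB, hp, hq]; ring
  have hbound : ∀ z ∈ X, lin A B z ≤ lin A B x := by
    intro z hz
    rw [hlinAB, hlinAB]
    by_cases hcz : lin a b x < lin a b z
    · have hzC : z ∈ C := Finset.mem_filter.2 ⟨hz, hcz⟩
      have := hymin z hzC
      have hdy : (0 : ℚ) < ((lin a b y - lin a b x : ℤ) : ℚ) := by exact_mod_cast hqpos
      have hdz : (0 : ℚ) < ((lin a b z - lin a b x : ℤ) : ℚ) := by
        have : (0:ℤ) < lin a b z - lin a b x := by omega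
        exact_mod_cast this
      rw [div_le_div_iff₀ hdy hdz] at this
      have hineq : (lin N 1 x - lin N 1 y) * (lin a b z - lin a b x) ≤
          (lin N 1 x - lin N 1 z) * (lin a b y - lin a b x) := by exact_mod_cast this
      rw [hp, hq]
      nlinarith [hineq]
    · push_neg at hcz
      have hφ : lin N 1 z ≤ lin N 1 x := hxmax z hz
      nlinarith [mul_le_mul_of_nonneg_left hφ (le_of_lt hqpos),
        mul_le_mul_of_nonneg_left hcz (le_of_lt hppos)]
  have hMpos : 0 < lin A B x := by
    have h1 : lin A B x⁻¹ ≤ lin A B x := hbound _ (hsym x hxX)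
    rw [lin_inv] at h1
    rcases lt_or_eq_of_le (by linarith : (0:ℤ) ≤ lin A B x) with h | h
    · exact h
    · exfalso
      apply exists_nonzero_lin X hgen A B
      · rintro ⟨hA0, hB0'⟩
        have hpab : p * (a - b * N) = 0 := by
          rw [hA, hB] at *
          linear_combination hA0 - N * hB0'
        rcases mul_eq_zero.1 hpab with h' | h'
        · omega
        · exact hab h'
      · intro z hz
        have hz1 := hbound z hz
        have hz2 := hbound z⁻¹ (hsym z hz)
        rw [lin_inv] at hz2
        omega
  exact ⟨x, hxX, y, hyX, Ne.symm hyx, A, B, lin A B x, hMpos, rfl, hMxy, hbound⟩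

end Z2GG

theorem Z2_exponential_geodesic_growth_every_generating_set
    (X : Finset (Multiplicative (ℤ × ℤ)))
    (hsym : ∀ g ∈ X, g⁻¹ ∈ X)
    (hgen : Subgroup.closure (X : Set (Multiplicative (ℤ × ℤ))) = ⊤) :
    ∃ x y : Multiplicative (ℤ × ℤ), x ∈ X ∧ y ∈ X ∧
      (∀ n : ℕ, ∀ w : List (Multiplicative (ℤ × ℤ)),
        w.Perm (List.replicate n x ++ List.replicate n y) →
          IsGeodesicWord (X : Set (Multiplicative (ℤ × ℤ))) w) ∧
      ∀ n : ℕ, 2 ^ n ≤ geodesicGrowth (X : Set (Multiplicative (ℤ × ℤ))) (2 * n) := by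
  classical
  obtain ⟨x, hxX, y, hyX, hxy, A, B, M, hM, hlx, hly, hbd⟩ := Z2GG.exists_edge X hsym hgen
  -- the key geodesic property
  have geo : ∀ n : ℕ, ∀ w : List (Multiplicative (ℤ × ℤ)),
      w.Perm (List.replicate n x ++ List.replicate n y) →
      IsGeodesicWord (X : Set (Multiplicative (ℤ × ℤ))) w := by
    intro n w hperm
    have hlenw : w.length = n + n := by
      rw [hperm.length_eq]; simp
    constructor
    · intro a ha
      have := hperm.subset ha
      simp only [List.mem_append, List.mem_replicate] at this
      rcases this with ⟨-, rfl⟩ | ⟨-, rfl⟩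
      · exact hxX
      · exact hyX
    · intro w' hw' hprod
      have h1 : Z2GG.lin A B w'.prod ≤ w'.length * M :=
        Z2GG.lin_prod_le A B M w' (fun a ha => hbd a (hw' a ha))
      have h2 : Z2GG.lin A B w.prod = (n + n) * M := by
        rw [hperm.prod_eq, List.prod_append, List.prod_replicate, List.prod_replicate,
          Z2GG.lin_mul, Z2GG.lin_pow, Z2GG.lin_pow, hlx, hly]
        push_cast; ring
      rw [hprod, h2] at h1
      have hle : ((n : ℤ) + n) ≤ (w'.length : ℤ) :=
        le_of_mul_le_mul_right (by linarith) hM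
      rw [hlenw]
      exact_mod_cast hle
  refine ⟨x, y, hxX, hyX, geo, ?_⟩
  intro n
  -- encode subsets of Fin n as permutations of x^n y^n
  set k : Bool → List (Multiplicative (ℤ × ℤ)) := fun b => cond b [x, y] [y, x] with hk
  have flat_perm : ∀ l : List Bool,
      (l.flatMap k).Perm (List.replicate l.length x ++ List.replicate l.length y) := by
    intro l
    induction l with
    | nil => simp
    | cons b t ih =>
      have base : (y :: t.flatMap k).Perm
          (List.replicate t.length x ++ y :: List.replicate t.length y) :=
        (ih.cons y).trans List.perm_middle.symm
      cases b
      · simp only [hk, List.flatMap_cons, Bool.cond_false, List.cons_append, List.nil_append,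
          List.length_cons, List.replicate_succ]
        exact (List.Perm.swap x y _).trans (base.cons x)
      · simp only [hk, List.flatMap_cons, Bool.cond_true, List.cons_append, List.nil_append,
          List.length_cons, List.replicate_succ]
        exact base.cons x
  have flat_inj : ∀ l₁ l₂ : List Bool, l₁.length = l₂.length →
      l₁.flatMap k = l₂.flatMap k → l₁ = l₂ := by
    intro l₁
    induction l₁ with
    | nil =>
      intro l₂ hl he
      cases l₂ with
      | nil => rfl
      | cons b t => simp at hl
    | cons b t ih =>
      intro l₂ hl he
      cases l₂ with
      | nil => simp at hl
      | cons b' t' =>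
        cases b <;> cases b' <;>
          simp only [hk, List.flatMap_cons, Bool.cond_true, Bool.cond_false, List.cons_append,
            List.nil_append, List.cons.injEq] at he
        · rw [ih t' (by simpa using hl) he.2.2]
        · exact absurd he.1 hxy.symm
        · exact absurd he.1 hxy
        · rw [ih t' (by simpa using hl) he.2.2]
  set F : (Fin n → Bool) → List (Multiplicative (ℤ × ℤ)) :=
    fun f => (List.ofFn f).flatMap k with hF
  have hFperm : ∀ f, (F f).Perm (List.replicate n x ++ List.replicate n y) := by
    intro f
    simpa using flat_perm (List.ofFn f)
  have hFinj : Function.Injective F := by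
    intro f g hfg
    have := flat_inj (List.ofFn f) (List.ofFn g) (by simp) hfg
    exact List.ofFn_inj.1 this
  set S : Set (List (Multiplicative (ℤ × ℤ))) :=
    {w | IsGeodesicWord (X : Set (Multiplicative (ℤ × ℤ))) w ∧ w.length ≤ 2 * n} with hS
  have hsub : Set.range F ⊆ S := by
    rintro _ ⟨f, rfl⟩
    refine ⟨geo n (F f) (hFperm f), ?_⟩
    rw [(hFperm f).length_eq]
    simp; omega
  have hfinX : Finite ↥(X : Set (Multiplicative (ℤ × ℤ))) := X.finite_toSet.to_subtype
  have hSfin : S.Finite := by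
    apply Set.Finite.subset (Set.Finite.image (List.map Subtype.val)
      (List.finite_length_le ↥(X : Set (Multiplicative (ℤ × ℤ))) (2 * n)))
    rintro w ⟨⟨hmem, -⟩, hlen⟩
    refine ⟨w.pmap Subtype.mk hmem, ?_, ?_⟩
    · simpa using hlen
    · rw [List.map_pmap]
      simp [List.pmap_eq_map]
  have hcard : (Set.range F).ncard = 2 ^ n := by
    rw [← Set.image_univ, Set.ncard_image_of_injective _ hFinj, Set.ncard_univ]
    simp [Nat.card_eq_fintype_card]
  calc (2 : ℕ) ^ n = (Set.range F).ncard := hcard.symm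
    _ ≤ S.ncard := Set.ncard_le_ncard hsub hSfin
    _ = geodesicGrowth (X : Set (Multiplicative (ℤ × ℤ))) (2 * n) := rfl
end

section
/- Let X be a finite symmetric generating set of ℤ², viewed as vectors in ℝ², and let P be the convex hull of X. If x_i, x_j ∈ X are such that the segment joining x_i to x_j lies entirely on the boundary of P, then the element n·x_i + n·x_j is at word-distance exactly 2n from 0 in the word metric on ℤ² determined by X. -/
/-!
The gauge of `P` is a norm on `ℝ²` with `gauge P x ≤ 1` for every generator, so by the triangle
inequality a word of length `L` has its sum in `L • P`: word length dominates the gauge. The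
midpoint `m` of the edge `[xi, xj]` lies on the frontier of `P`, and `P` is a neighbourhood of `0`
(it is symmetric and full-dimensional because `X` generates `ℤ²`), so `gauge P m = 1`. Hence
`n • xi + n • xj = 2n • m` has gauge `2n`, and the word made of `n` copies each of `xi` and `xj`
attains this bound.
-/

/-- The embedding of the integer lattice ℤ² into ℝ². -/
def latticeEmb : ℤ × ℤ → ℝ × ℝ := fun p => ((p.1 : ℝ), (p.2 : ℝ))

open Set Topology

theorem Convex.zero_mem_interior_of_neg_mem {E : Type*} [AddCommGroup E] [Module ℝ E]
    [TopologicalSpace E] [IsTopologicalAddGroup E] [ContinuousSMul ℝ E] {s : Set E}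
    (hs : Convex ℝ s) (hneg : ∀ x ∈ s, -x ∈ s) (hint : (interior s).Nonempty) :
    (0 : E) ∈ interior s := by
  obtain ⟨y, hy⟩ := hint
  refine hs.openSegment_interior_self_subset_interior hy (hneg y (interior_subset hy)) ?_
  exact ⟨1 / 2, 1 / 2, by norm_num, by norm_num, by norm_num, by module⟩

theorem affineSpan_eq_top_of_neg_mem {k V : Type*} [Field k] [NeZero (2 : k)]
    [AddCommGroup V] [Module k V] [Nontrivial V] {s : Set V}
    (hneg : ∀ x ∈ s, -x ∈ s) (hspan : Submodule.span k s = ⊤) : affineSpan k s = ⊤ := by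
  have hne : s.Nonempty := by
    by_contra! h
    rw [h, Submodule.span_empty] at hspan
    exact bot_ne_top hspan
  rw [AffineSubspace.affineSpan_eq_top_iff_vectorSpan_eq_top_of_nonempty k V V hne, eq_top_iff,
    ← hspan, Submodule.span_le]
  intro x hx
  have h2x : x - -x ∈ vectorSpan k s := vsub_mem_vectorSpan k hx (hneg x hx)
  have hx2 : x = (2 : k)⁻¹ • (x - -x) := by
    rw [sub_neg_eq_add, ← two_smul k x, smul_smul, inv_mul_cancel₀ two_ne_zero, one_smul]
  rw [hx2]
  exact Submodule.smul_mem _ _ h2x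

theorem zero_mem_interior_convexHull_of_neg_mem {E : Type*} [NormedAddCommGroup E]
    [NormedSpace ℝ E] [FiniteDimensional ℝ E] [Nontrivial E] {s : Set E}
    (hneg : ∀ x ∈ s, -x ∈ s) (hspan : Submodule.span ℝ s = ⊤) :
    (0 : E) ∈ interior (convexHull ℝ s) := by
  refine (convex_convexHull ℝ s).zero_mem_interior_of_neg_mem (fun x hx ↦ ?_)
    (interior_convexHull_nonempty_iff_affineSpan_eq_top.2 (affineSpan_eq_top_of_neg_mem hneg hspan))
  have hs : -s ⊆ s := fun y hy ↦ neg_neg y ▸ hneg (-y) hy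
  have : -x ∈ -convexHull ℝ s := Set.neg_mem_neg.2 hx
  rw [← convexHull_neg] at this
  exact convexHull_mono hs this

theorem gauge_list_sum_le_length {E : Type*} [AddCommGroup E] [Module ℝ E] {s : Set E}
    (hs : Convex ℝ s) (habs : Absorbent ℝ s) {w : List E} (hw : ∀ v ∈ w, v ∈ s) :
    gauge s w.sum ≤ w.length := by
  induction w with
  | nil => simp [gauge_zero]
  | cons v w ih =>
    rw [List.sum_cons, List.length_cons, Nat.cast_succ, add_comm (w.length : ℝ)]
    exact (gauge_add_le hs habs v w.sum).trans <| add_le_add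
      (gauge_le_one_of_mem (hw v List.mem_cons_self))
      (ih fun u hu ↦ hw u (List.mem_cons_of_mem v hu))

def latticeEmbAddHom : ℤ × ℤ →+ ℝ × ℝ := (Int.castAddHom ℝ).prodMap (Int.castAddHom ℝ)

theorem coe_latticeEmbAddHom : ⇑latticeEmbAddHom = latticeEmb := rfl

theorem span_latticeEmb_image_eq_top {X : Set (ℤ × ℤ)} (hgen : AddSubgroup.closure X = ⊤) :
    Submodule.span ℝ (latticeEmb '' X) = ⊤ := by
  have hmem : ∀ p, latticeEmb p ∈ Submodule.span ℝ (latticeEmb '' X) := by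
    intro p
    have hp := AddSubgroup.mem_map_of_mem latticeEmbAddHom (hgen ▸ AddSubgroup.mem_top p)
    rw [AddMonoidHom.map_closure, coe_latticeEmbAddHom] at hp
    exact (AddSubgroup.closure_le (Submodule.span ℝ _).toAddSubgroup).2 Submodule.subset_span hp
  rw [eq_top_iff]
  rintro ⟨a, b⟩ -
  have hab : ((a, b) : ℝ × ℝ) = a • latticeEmb (1, 0) + b • latticeEmb (0, 1) := by
    simp [latticeEmb]
  rw [hab]
  exact Submodule.add_mem _ (Submodule.smul_mem _ _ (hmem _)) (Submodule.smul_mem _ _ (hmem _))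

theorem latticeEmb_nsmul_add_nsmul (n : ℕ) (a b : ℤ × ℤ) :
    latticeEmb (n • a + n • b) = (2 * n : ℝ) • midpoint ℝ (latticeEmb a) (latticeEmb b) := by
  rw [← coe_latticeEmbAddHom, map_add, map_nsmul, map_nsmul, midpoint_eq_smul_add, invOf_eq_inv]
  simp only [← Nat.cast_smul_eq_nsmul ℝ]
  module

theorem boundary_edge_gives_word_distance (X : Finset (ℤ × ℤ))
    (hsym : ∀ v ∈ X, -v ∈ X) (hgen : AddSubgroup.closure (X : Set (ℤ × ℤ)) = ⊤)
    (xi xj : ℤ × ℤ) (hxi : xi ∈ X) (hxj : xj ∈ X)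
    (hseg : segment ℝ (latticeEmb xi) (latticeEmb xj) ⊆
      frontier (convexHull ℝ (latticeEmb '' (X : Set (ℤ × ℤ)))))
    (n : ℕ) :
    IsLeast {l : ℕ | ∃ w : List (ℤ × ℤ), (∀ v ∈ w, v ∈ X) ∧
      w.sum = n • xi + n • xj ∧ w.length = l} (2 * n) := by
  set P := convexHull ℝ (latticeEmb '' (X : Set (ℤ × ℤ)))
  have hP : P ∈ 𝓝 0 := mem_interior_iff_mem_nhds.1 <| zero_mem_interior_convexHull_of_neg_mem
    (by rintro _ ⟨v, hv, rfl⟩; exact ⟨-v, hsym v hv, by simp [latticeEmb]⟩)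
    (span_latticeEmb_image_eq_top hgen)
  have hmid : gauge P (midpoint ℝ (latticeEmb xi) (latticeEmb xj)) = 1 :=
    (gauge_eq_one_iff_mem_frontier (convex_convexHull ℝ _) hP).2 (hseg (midpoint_mem_segment _ _))
  refine ⟨⟨List.replicate n xi ++ List.replicate n xj, ?_, by simp, by simp [two_mul]⟩, ?_⟩
  · intro v hv
    rcases List.mem_append.1 hv with h | h <;> rw [List.eq_of_mem_replicate h] <;> assumption
  · rintro _ ⟨w, hw, hsum, rfl⟩
    have hwP : ∀ v ∈ w.map latticeEmb, v ∈ P := by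
      simp only [List.mem_map]
      rintro _ ⟨v, hv, rfl⟩
      exact subset_convexHull ℝ _ ⟨v, hw v hv, rfl⟩
    have hlen : (2 * n : ℝ) ≤ w.length := calc
      (2 * n : ℝ) = gauge P (latticeEmb w.sum) := by
          rw [hsum, latticeEmb_nsmul_add_nsmul, gauge_smul_of_nonneg (by positivity), hmid,
            smul_eq_mul, mul_one]
      _ = gauge P (w.map latticeEmb).sum := by rw [← coe_latticeEmbAddHom, map_list_sum]
      _ ≤ w.length := by
          simpa using gauge_list_sum_le_length (convex_convexHull ℝ _) (absorbent_nhds_zero hP) hwP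
    exact_mod_cast hlen
end

section
/- Every group that surjects onto ℤ² has exponential geodesic growth with respect to every finite symmetric generating set: if φ: G → ℤ² is surjective and X is any finite symmetric generating set of G, then there is b > 1 with Γ_{G,X}(n) ≥ bⁿ for all sufficiently large n. -/
section Geodesics

variable {G : Type*} [Group G]

theorem toAdd_map_prod_le (F : G →* Multiplicative ℤ) {M : ℤ} :
    ∀ {w : List G}, (∀ a ∈ w, (F a).toAdd ≤ M) → (F w.prod).toAdd ≤ w.length * M
  | [], _ => by simp
  | a :: w, h => by
    have ha := h a List.mem_cons_self
    have hw := toAdd_map_prod_le F fun b hb => h b (List.mem_cons_of_mem a hb)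
    simp only [List.prod_cons, map_mul, toAdd_mul, List.length_cons]
    push_cast
    linarith

theorem toAdd_map_prod_eq (F : G →* Multiplicative ℤ) {M : ℤ} :
    ∀ {w : List G}, (∀ a ∈ w, (F a).toAdd = M) → (F w.prod).toAdd = w.length * M
  | [], _ => by simp
  | a :: w, h => by
    have ha := h a List.mem_cons_self
    have hw := toAdd_map_prod_eq F fun b hb => h b (List.mem_cons_of_mem a hb)
    simp only [List.prod_cons, map_mul, toAdd_mul, List.length_cons, ha, hw]
    push_cast
    ring

theorem isGeodesicWord_of_forall_eq_max {X : Set G} (F : G →* Multiplicative ℤ) {M : ℤ}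
    (hM : 0 < M) (hX : ∀ x ∈ X, (F x).toAdd ≤ M) {w : List G}
    (hw : ∀ a ∈ w, a ∈ X ∧ (F a).toAdd = M) : IsGeodesicWord X w := by
  refine ⟨fun a ha => (hw a ha).1, fun w' hw' hprod => ?_⟩
  have hle := toAdd_map_prod_le F fun a ha => hX a (hw' a ha)
  rw [hprod, toAdd_map_prod_eq F fun a ha => (hw a ha).2] at hle
  exact_mod_cast le_of_mul_le_mul_right hle hM

theorem finite_setOf_isGeodesicWord_length_le {X : Set G} (hX : X.Finite) (n : ℕ) :
    {w : List G | IsGeodesicWord X w ∧ w.length ≤ n}.Finite := by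
  have := hX.to_subtype
  refine ((List.finite_length_le X n).image (List.map Subtype.val)).subset ?_
  rintro w ⟨⟨hmem, -⟩, hlen⟩
  exact ⟨w.pmap Subtype.mk hmem, by simpa using hlen, by rw [List.map_pmap]; simp⟩

theorem two_pow_le_geodesicGrowth {X : Set G} (hX : X.Finite) {A B : G} (hAB : A ≠ B)
    (hgeo : ∀ w : List G, (∀ a ∈ w, a = A ∨ a = B) → IsGeodesicWord X w) (n : ℕ) :
    2 ^ n ≤ geodesicGrowth X n := by
  let word : (Fin n → Bool) → List G := fun v => List.ofFn fun i => if v i then A else B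
  have hword : Function.Injective word := by
    intro v v' h
    funext i
    have := congrFun (List.ofFn_injective h) i
    cases hv : v i <;> cases hv' : v' i <;> simp_all [hAB.symm]
  have hmaps : ∀ v ∈ (Set.univ : Set (Fin n → Bool)),
      word v ∈ {w : List G | IsGeodesicWord X w ∧ w.length ≤ n} := by
    refine fun v _ => ⟨hgeo _ fun a ha => ?_, by simp [word]⟩
    obtain ⟨i, rfl⟩ := List.mem_ofFn.mp ha
    by_cases hv : v i <;> simp [hv]
  calc 2 ^ n = (Set.univ : Set (Fin n → Bool)).ncard := by rw [Set.ncard_univ]; simp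
    _ ≤ geodesicGrowth X n :=
      Set.ncard_le_ncard_of_injOn word hmaps hword.injOn
        (finite_setOf_isGeodesicWord_length_le hX n)

end Geodesics

theorem AddMonoidHom.fst_ne_zero {R S : Type*} [AddZeroClass R] [Nontrivial R] [AddZeroClass S] :
    AddMonoidHom.fst R S ≠ 0 := fun h => by
  obtain ⟨r, hr⟩ := exists_ne (0 : R)
  exact hr (DFunLike.congr_fun h (r, 0))

def crossWith (d : ℤ × ℤ) : ℤ × ℤ →+ ℤ where
  toFun v := v.1 * d.2 - v.2 * d.1
  map_zero' := by simp
  map_add' u v := by simp only [Prod.fst_add, Prod.snd_add]; ring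

@[simp]
theorem crossWith_apply (d v : ℤ × ℤ) : crossWith d v = v.1 * d.2 - v.2 * d.1 := rfl

theorem crossWith_ne_zero {d : ℤ × ℤ} (hd : d ≠ 0) : crossWith d ≠ 0 := by
  intro h
  have h' : d.2 * d.2 + d.1 * d.1 = 0 := by simpa using DFunLike.congr_fun h (d.2, -d.1)
  exact hd (Prod.ext (by simp only [Prod.fst_zero]; nlinarith)
    (by simp only [Prod.snd_zero]; nlinarith))

/-- If `a` is the unique point of `Y` with largest first coordinate, the neighbour `b` of `a` of
least slope as seen from `a` spans a supporting line of `Y`. -/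
theorem exists_cross_le_of_fst_lt {Y : Finset (ℤ × ℤ)} {a : ℤ × ℤ}
    (hlt : ∀ y ∈ Y, y ≠ a → y.1 < a.1) (hne : (Y.erase a).Nonempty) :
    ∃ b ∈ Y, b ≠ a ∧ ∀ y ∈ Y, crossWith (b - a) y ≤ crossWith (b - a) a := by
  let slope : ℤ × ℤ → ℚ := fun y => ((a.2 - y.2 : ℤ) : ℚ) / ((a.1 - y.1 : ℤ) : ℚ)
  obtain ⟨b, hb, hmin⟩ := (Y.erase a).exists_min_image slope hne
  obtain ⟨hba, hbY⟩ := Finset.mem_erase.mp hb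
  refine ⟨b, hbY, hba, fun y hy => ?_⟩
  rcases eq_or_ne y a with rfl | hya
  · rfl
  have hb1 : (0 : ℚ) < ((a.1 - b.1 : ℤ) : ℚ) := by exact_mod_cast sub_pos.mpr (hlt b hbY hba)
  have hy1 : (0 : ℚ) < ((a.1 - y.1 : ℤ) : ℚ) := by exact_mod_cast sub_pos.mpr (hlt y hy hya)
  have key := (div_le_div_iff₀ hb1 hy1).mp (hmin y (Finset.mem_erase.mpr ⟨hya, hy⟩))
  have key' : (a.2 - b.2) * (a.1 - y.1) ≤ (a.2 - y.2) * (a.1 - b.1) := by exact_mod_cast key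
  simp only [crossWith_apply, Prod.fst_sub, Prod.snd_sub]
  linarith

theorem exists_addMonoidHom_ne_zero_two_maximizers {Y : Finset (ℤ × ℤ)} (hY : Y.Nontrivial) :
    ∃ f : ℤ × ℤ →+ ℤ, f ≠ 0 ∧
      ∃ a ∈ Y, ∃ b ∈ Y, a ≠ b ∧ f b = f a ∧ ∀ y ∈ Y, f y ≤ f a := by
  classical
  obtain ⟨a, ha, hmax⟩ := Y.exists_max_image Prod.fst hY.nonempty
  by_cases hfst : ∃ b ∈ Y, b ≠ a ∧ b.1 = a.1
  · obtain ⟨b, hb, hba, hb1⟩ := hfst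
    exact ⟨_, AddMonoidHom.fst_ne_zero, a, ha, b, hb, hba.symm, hb1, hmax⟩
  · push Not at hfst
    obtain ⟨b, hb, hba, hle⟩ := exists_cross_le_of_fst_lt
      (fun y hy hya => (hmax y hy).lt_of_ne (hfst y hy hya)) hY.erase_nonempty
    refine ⟨crossWith (b - a), crossWith_ne_zero (sub_ne_zero.mpr hba), a, ha, b, hb, hba.symm,
      ?_, hle⟩
    rw [← sub_eq_zero, ← map_sub]
    simp only [crossWith_apply]
    ring

theorem exists_pos_of_surjective {G V : Type*} [Group G] [AddGroup V]
    {φ : G →* Multiplicative V} (hφ : Function.Surjective φ) {X : Set G}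
    (hsym : ∀ g ∈ X, g⁻¹ ∈ X) (hgen : Subgroup.closure X = ⊤) {f : V →+ ℤ} (hf : f ≠ 0) :
    ∃ x ∈ X, 0 < f (φ x).toAdd := by
  by_contra! hle
  have hX : Set.EqOn (f.toMultiplicative.comp φ) (1 : G →* Multiplicative ℤ) X := fun x hx => by
    have hinv := hle x⁻¹ (hsym x hx)
    simp only [map_inv, toAdd_inv, map_neg, neg_nonpos] at hinv
    simp [le_antisymm (hle x hx) hinv]
  refine hf (AddMonoidHom.ext fun v => ?_)
  obtain ⟨g, rfl⟩ := hφ (Multiplicative.ofAdd v)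
  exact congrArg Multiplicative.toAdd (DFunLike.congr_fun (MonoidHom.eq_of_eqOn_dense hgen hX) g)

theorem surjects_onto_Z2_implies_exponential_geodesic_growth {G : Type*} [Group G]
    (φ : G →* Multiplicative (ℤ × ℤ)) (hφ : Function.Surjective φ)
    (X : Finset G) (hsym : ∀ g ∈ X, g⁻¹ ∈ X)
    (hgen : Subgroup.closure (X : Set G) = ⊤) :
    ∃ b : ℝ, 1 < b ∧ ∃ N : ℕ, ∀ n ≥ N,
      b ^ n ≤ (geodesicGrowth (X : Set G) n : ℝ) := by
  classical
  let Y := X.image fun x => (φ x).toAdd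
  have hmemY : ∀ x ∈ X, (φ x).toAdd ∈ Y := fun x => Finset.mem_image_of_mem _
  obtain ⟨x₀, hx₀, hx₀pos⟩ := exists_pos_of_surjective hφ hsym hgen AddMonoidHom.fst_ne_zero
  have hY : Y.Nontrivial := ⟨_, hmemY x₀ hx₀, _, hmemY _ (hsym x₀ hx₀),
    ne_of_apply_ne (AddMonoidHom.fst ℤ ℤ) <| by
      simpa only [map_inv, toAdd_inv, map_neg] using (neg_lt_self hx₀pos).ne'⟩
  obtain ⟨f, hf, a, ha, b, hb, hab, hfb, hmax⟩ := exists_addMonoidHom_ne_zero_two_maximizers hY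
  obtain ⟨x₁, hx₁, hx₁pos⟩ := exists_pos_of_surjective hφ hsym hgen hf
  obtain ⟨A, hA, rfl⟩ := Finset.mem_image.mp ha
  obtain ⟨B, hB, rfl⟩ := Finset.mem_image.mp hb
  have hM : 0 < f (φ A).toAdd := hx₁pos.trans_le (hmax _ (hmemY x₁ hx₁))
  refine ⟨2, one_lt_two, 0, fun n _ => ?_⟩
  have hgeo (w : List G) (hw : ∀ c ∈ w, c = A ∨ c = B) : IsGeodesicWord (X : Set G) w :=
    isGeodesicWord_of_forall_eq_max (f.toMultiplicative.comp φ) hM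
      (fun x hx => hmax _ (hmemY x hx)) fun c hc => by
        rcases hw c hc with rfl | rfl
        exacts [⟨hA, rfl⟩, ⟨hB, hfb⟩]
  exact_mod_cast two_pow_le_geodesicGrowth X.finite_toSet (fun h => hab (by rw [h])) hgeo n
end

section
/- Every finitely generated nilpotent group that is not virtually cyclic admits a surjective homomorphism onto ℤ². -/
/-!
The abelianization of `G` is a finitely generated abelian group: if its free rank is at least two
it maps onto `ℤ²`, otherwise it is virtually cyclic. A finitely generated nilpotent group with
virtually cyclic abelianization is virtually cyclic, by induction on the nilpotency class. The last
nontrivial term `Z` of the lower central series is central and `G ⧸ Z` is virtually cyclic by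
induction, so `G` has an abelian subgroup `H ⊇ Z` of finite index, finitely generated by Schreier's
lemma. `Z` is generated by central commutators `⁅x, g⁆`, which are therefore bimultiplicative:
`⁅x, g⁆ ^ (a * b) = ⁅x ^ a, g ^ b⁆ = 1` once `x ^ a, g ^ b ∈ H`. So `Z` lies in the torsion
subgroup of `H`, which is finite, and a finite-by-(virtually cyclic) group is virtually cyclic.
-/

open Subgroup
open scoped commutatorElement DirectSum

def IsVirtuallyCyclic (G : Type*) [Group G] : Prop :=
  ∃ H : Subgroup G, IsCyclic H ∧ H.FiniteIndex

section

variable {G Q : Type*} [Group G] [Group Q]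

theorem IsVirtuallyCyclic.of_isCyclic [IsCyclic G] : IsVirtuallyCyclic G := by
  obtain ⟨g, hg⟩ := _root_.isCyclic_iff_exists_zpowers_eq_top.mp ‹IsCyclic G›
  exact ⟨⊤, (Subgroup.isCyclic_iff_exists_zpowers_eq_top _).mpr ⟨g, hg⟩, inferInstance⟩

theorem IsVirtuallyCyclic.of_surjective {f : G →* Q} (hf : Function.Surjective f)
    (hG : IsVirtuallyCyclic G) : IsVirtuallyCyclic Q := by
  obtain ⟨H, hH, hHi⟩ := hG
  exact ⟨H.map f, isCyclic_of_surjective _ (f.subgroupMap_surjective H),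
    ⟨fun h0 => hHi.index_ne_zero (Nat.eq_zero_of_zero_dvd (h0 ▸ index_map_dvd H hf))⟩⟩

open scoped Pointwise in
theorem Subgroup.relIndex_sup_ne_zero_of_finite (K N : Subgroup G) [N.Normal] [Finite N] :
    K.relIndex (N ⊔ K) ≠ 0 := by
  -- `N ⊔ K = N * K`, so every coset of `K` in `N ⊔ K` is represented by an element of `N`.
  have : Finite (↥(N ⊔ K) ⧸ K.subgroupOf (N ⊔ K)) := by
    refine Finite.of_surjective (fun n : N => ((⟨n, mem_sup_left n.2⟩ : ↥(N ⊔ K)) : _ ⧸ _)) ?_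
    rintro ⟨x, hx⟩
    obtain ⟨n, hn, k, hk, rfl⟩ : x ∈ (N : Set G) * (K : Set G) := by rwa [← normal_mul]
    refine ⟨⟨n, hn⟩, QuotientGroup.eq.mpr ?_⟩
    simpa [mem_subgroupOf] using hk
  exact index_ne_zero_of_finite

theorem IsVirtuallyCyclic.of_surjective_of_finite_ker {f : G →* Q} (hf : Function.Surjective f)
    [Finite f.ker] (hQ : IsVirtuallyCyclic Q) : IsVirtuallyCyclic G := by
  obtain ⟨C, hC, hCi⟩ := hQ
  obtain ⟨q, rfl⟩ := (Subgroup.isCyclic_iff_exists_zpowers_eq_top C).mp hC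
  obtain ⟨g, rfl⟩ := hf q
  refine ⟨zpowers g, inferInstance, ⟨?_⟩⟩
  have hsup : (f.ker ⊔ zpowers g).index ≠ 0 := by
    have := index_map (zpowers g) f
    rw [MonoidHom.map_zpowers, f.range_eq_top_of_surjective hf, index_top, mul_one, sup_comm]
      at this
    exact this ▸ hCi.index_ne_zero
  rw [← relIndex_mul_index (le_sup_right : zpowers g ≤ f.ker ⊔ zpowers g)]
  exact mul_ne_zero ((zpowers g).relIndex_sup_ne_zero_of_finite f.ker) hsup

theorem Abelianization.of_surjective :
    Function.Surjective (Abelianization.of : G →* Abelianization G) :=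
  QuotientGroup.mk_surjective

theorem Abelianization.map_surjective {f : G →* Q} (hf : Function.Surjective f) :
    Function.Surjective (Abelianization.map f) := by
  intro y
  obtain ⟨q, rfl⟩ := Abelianization.of_surjective y
  obtain ⟨g, rfl⟩ := hf q
  exact ⟨Abelianization.of g, Abelianization.map_of f g⟩

theorem commutatorElement_pow_right_of_mem_center {x g : G} (h : ⁅x, g⁆ ∈ center G) (n : ℕ) :
    ⁅x, g ^ n⁆ = ⁅x, g⁆ ^ n := by
  have hconj : x * g * x⁻¹ = ⁅x, g⁆ * g := by rw [commutatorElement_def]; group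
  rw [commutatorElement_def, ← conj_pow, hconj,
    (show Commute ⁅x, g⁆ g from (mem_center_iff.mp h g).symm).mul_pow, mul_inv_cancel_right]

theorem commutatorElement_pow_left_of_mem_center {x g : G} (h : ⁅x, g⁆ ∈ center G) (n : ℕ) :
    ⁅x ^ n, g⁆ = ⁅x, g⁆ ^ n := by
  have h' : ⁅g, x⁆ ∈ center G := commutatorElement_inv x g ▸ inv_mem h
  rw [← commutatorElement_inv g, commutatorElement_pow_right_of_mem_center h', ← inv_pow,
    commutatorElement_inv]

theorem isOfFinOrder_commutatorElement_of_mem_center (H : Subgroup G) [IsMulCommutative H]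
    [H.FiniteIndex] {x g : G} (h : ⁅x, g⁆ ∈ center G) : IsOfFinOrder ⁅x, g⁆ := by
  have hH : H.index ≠ 0 := FiniteIndex.index_ne_zero
  obtain ⟨a, ha, -, hxa⟩ := exists_pow_mem_of_index_ne_zero hH x
  obtain ⟨b, hb, -, hgb⟩ := exists_pow_mem_of_index_ne_zero hH g
  have h' : ⁅x ^ a, g⁆ ∈ center G := commutatorElement_pow_left_of_mem_center h a ▸ pow_mem h a
  refine isOfFinOrder_iff_pow_eq_one.mpr ⟨a * b, Nat.mul_pos ha hb, ?_⟩
  rw [pow_mul, ← commutatorElement_pow_left_of_mem_center h,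
    ← commutatorElement_pow_right_of_mem_center h', commutatorElement_eq_one_iff_mul_comm]
  exact setLike_mul_comm hxa hgb

theorem exists_isMulCommutative_of_isVirtuallyCyclic_quotient {Z : Subgroup G} [Z.Normal]
    (hZ : Z ≤ center G) (hQ : IsVirtuallyCyclic (G ⧸ Z)) :
    ∃ H : Subgroup G, Z ≤ H ∧ H.FiniteIndex ∧ IsMulCommutative H := by
  obtain ⟨C, hC, hCi⟩ := hQ
  refine ⟨C.comap (QuotientGroup.mk' Z), fun z hz => ?_, ⟨?_⟩, ?_⟩
  · simp [(QuotientGroup.eq_one_iff z).mpr hz, one_mem]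
  · rw [index_comap_of_surjective _ (QuotientGroup.mk'_surjective Z)]
    exact hCi.index_ne_zero
  · refine ((QuotientGroup.mk' Z).subgroupComap C).isMulCommutative_of_isCyclic_of_ker_le_center
      fun x hx => mem_center_iff.mpr fun y => Subtype.ext ?_
    exact mem_center_iff.mp (hZ ((QuotientGroup.eq_one_iff _).mp (congrArg Subtype.val hx))) y

theorem Subgroup.fg_of_commGroup {A : Type*} [CommGroup A] [Group.FG A] (S : Subgroup A) :
    S.FG := by
  have : Module.Finite ℤ (Additive A) := Module.Finite.iff_addGroup_fg.mpr inferInstance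
  rw [fg_iff_add_fg, ← AddSubgroup.toIntSubmodule_toAddSubgroup S.toAddSubgroup,
    ← Submodule.fg_iff_addSubgroup_fg]
  exact IsNoetherian.noetherian _

theorem CommGroup.finite_torsion_of_fg (A : Type*) [CommGroup A] [Group.FG A] :
    Finite (CommGroup.torsion A) :=
  have := (Group.fg_iff_subgroup_fg _).mpr (CommGroup.torsion A).fg_of_commGroup
  CommGroup.finite_of_fg_isMulTorsion _ fun x => (subtype_injective _).isOfFinOrder_iff.mp x.2

open scoped IsMulCommutative in
theorem finite_commutator_of_le_center [Group.FG G] {N₁ N₂ : Subgroup G} [N₁.Normal] [N₂.Normal]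
    (hc : ⁅N₁, N₂⁆ ≤ center G) (hQ : IsVirtuallyCyclic (G ⧸ ⁅N₁, N₂⁆)) :
    Finite (⁅N₁, N₂⁆ : Subgroup G) := by
  obtain ⟨H, hZH, hHi, hH⟩ := exists_isMulCommutative_of_isVirtuallyCyclic_quotient hc hQ
  have := CommGroup.finite_torsion_of_fg H
  have : Finite ((CommGroup.torsion H).map H.subtype) :=
    Finite.of_surjective _ (H.subtype.subgroupMap_surjective _)
  have hle : ⁅N₁, N₂⁆ ≤ (CommGroup.torsion H).map H.subtype := by
    refine commutator_le.mpr fun x hx g hg => ?_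
    have hxg := commutator_mem_commutator hx hg
    refine ⟨⟨_, hZH hxg⟩, (CommGroup.mem_torsion _).mpr ?_, rfl⟩
    exact (subtype_injective H).isOfFinOrder_iff.mp
      (isOfFinOrder_commutatorElement_of_mem_center H (hc hxg))
  exact Finite.of_injective _ (inclusion_injective hle)

theorem IsVirtuallyCyclic.of_abelianization_of_lowerCentralSeries_eq_bot [Group.FG G] (n : ℕ)
    (hG : (⊤ : Subgroup G).lowerCentralSeries (n + 1) = ⊥)
    (hab : IsVirtuallyCyclic (Abelianization G)) : IsVirtuallyCyclic G := by
  induction n generalizing G with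
  | zero =>
    have : Finite (Abelianization.of (G := G)).ker := by
      rw [Abelianization.ker_of, ← top_lowerCentralSeries_one, hG]
      infer_instance
    exact hab.of_surjective_of_finite_ker Abelianization.of_surjective
  | succ n ih =>
    set Z := (⊤ : Subgroup G).lowerCentralSeries (n + 1)
    have hZ : Z ≤ center G := by
      rw [← centralizer_univ, ← coe_top, ← commutator_eq_bot_iff_le_centralizer]
      exact hG
    have hQ : IsVirtuallyCyclic (G ⧸ Z) := by
      refine ih ?_ (hab.of_surjective (Abelianization.map_surjective
        (QuotientGroup.mk'_surjective Z)))
      rw [← map_top_of_surjective _ (QuotientGroup.mk'_surjective Z), ← map_lowerCentralSeries,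
        Subgroup.map_eq_bot_iff, QuotientGroup.ker_mk']
    have : Finite (QuotientGroup.mk' Z).ker := by
      rw [QuotientGroup.ker_mk']
      exact finite_commutator_of_le_center hZ hQ
    exact hQ.of_surjective_of_finite_ker (QuotientGroup.mk'_surjective Z)

theorem IsVirtuallyCyclic.of_abelianization [Group.FG G] [Group.IsNilpotent G]
    (hab : IsVirtuallyCyclic (Abelianization G)) : IsVirtuallyCyclic G := by
  obtain ⟨n, hn⟩ := Subgroup.nilpotent_iff_lowerCentralSeries.mp ‹Group.IsNilpotent G›
  refine of_abelianization_of_lowerCentralSeries_eq_bot n (le_bot_iff.mp ?_) hab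
  exact hn ▸ Subgroup.lowerCentralSeries_antitone ⊤ n.le_succ

end

theorem CommGroup.exists_surjective_finsupp_int_finite_ker (A : Type*) [CommGroup A]
    [Group.FG A] :
    ∃ (n : ℕ) (f : A →* Multiplicative (Fin n →₀ ℤ)), Function.Surjective f ∧ Finite f.ker := by
  obtain ⟨n, ι, _, p, hp, e, ⟨φ⟩⟩ := AddCommGroup.equiv_free_prod_directSum_zmod (Additive A)
  have (i : ι) : NeZero (p i ^ e i) := ⟨pow_ne_zero _ (hp i).ne_zero⟩
  have : Finite (⨁ i, ZMod (p i ^ e i)) := Finite.of_equiv _ DFinsupp.equivFunOnFintype.symm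
  refine ⟨n, AddMonoidHom.toMultiplicativeRight ((AddMonoidHom.fst _ _).comp φ.toAddMonoidHom),
    fun x => ⟨Additive.toMul (φ.symm (x.toAdd, 0)), by simp⟩, ?_⟩
  refine Finite.of_injective (fun x => (φ (Additive.ofMul x.1)).2) fun x y hxy => ?_
  have hx : (φ (Additive.ofMul x.1)).1 = 0 := x.2
  have hy : (φ (Additive.ofMul y.1)).1 = 0 := y.2
  exact Subtype.ext (φ.injective (Prod.ext (hx.trans hy.symm) hxy))

theorem Finsupp.exists_surjective_int_prod {n : ℕ} (hn : 2 ≤ n) :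
    ∃ ψ : (Fin n →₀ ℤ) →+ ℤ × ℤ, Function.Surjective ψ := by
  let i : Fin n := ⟨0, by omega⟩
  let j : Fin n := ⟨1, by omega⟩
  have hij : i ≠ j := by simp [i, j, Fin.ext_iff]
  refine ⟨(Finsupp.applyAddHom i).prod (Finsupp.applyAddHom j), fun ⟨a, b⟩ =>
    ⟨Finsupp.single i a + Finsupp.single j b, ?_⟩⟩
  simp [hij, hij.symm]

theorem Finsupp.isAddCyclic_fin_int {n : ℕ} (hn : n ≤ 1) : IsAddCyclic (Fin n →₀ ℤ) := by
  interval_cases n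
  · infer_instance
  · exact isAddCyclic_of_surjective (Finsupp.singleAddHom 0)
      fun x => ⟨x 0, (Finsupp.unique_single x).symm⟩

theorem CommGroup.isVirtuallyCyclic_or_exists_surjective_int_prod (A : Type*) [CommGroup A]
    [Group.FG A] :
    IsVirtuallyCyclic A ∨ ∃ φ : A →* Multiplicative (ℤ × ℤ), Function.Surjective φ := by
  obtain ⟨n, f, hf, _⟩ := exists_surjective_finsupp_int_finite_ker A
  rcases Nat.lt_or_ge n 2 with hn | hn
  · have := isCyclic_multiplicative_iff.mpr (Finsupp.isAddCyclic_fin_int (Nat.le_of_lt_succ hn))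
    exact Or.inl (IsVirtuallyCyclic.of_isCyclic.of_surjective_of_finite_ker hf)
  · obtain ⟨ψ, hψ⟩ := Finsupp.exists_surjective_int_prod hn
    exact Or.inr ⟨(AddMonoidHom.toMultiplicative ψ).comp f, hψ.comp hf⟩

theorem nilpotent_not_virtually_cyclic_surjects_onto_Z2 (G : Type*) [Group G]
    [Group.FG G] [Group.IsNilpotent G]
    (h : ¬ ∃ H : Subgroup G, IsCyclic H ∧ H.FiniteIndex) :
    ∃ φ : G →* Multiplicative (ℤ × ℤ), Function.Surjective φ := by
  have : Group.FG (Abelianization G) := Group.fg_of_surjective Abelianization.of_surjective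
  rcases CommGroup.isVirtuallyCyclic_or_exists_surjective_int_prod (Abelianization G) with
    hab | ⟨φ, hφ⟩
  · exact absurd (IsVirtuallyCyclic.of_abelianization hab) h
  · exact ⟨φ.comp Abelianization.of, hφ.comp Abelianization.of_surjective⟩
end

section
/- In the group G₁ = ℤ² ⋊ C₂ = ⟨a, b, t | [a,b] = 1, t² = 1, tat = b⟩ with symmetric generating set {a, a⁻¹, t}, the number of geodesic words of length exactly n is 2n² − 2n for all n ≥ 5; in particular G₁ has polynomial geodesic growth (of degree 3 cumulatively) with respect to this generating set. -/
/-!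
Every element of `G₁` is `a ^ i * b ^ j * t ^ ε` for a unique `(i, j, ε)`, so words over
`{a, a⁻¹, t}` can be studied in a free model in which the letters act on such triples. Since
`b ^ j = t a ^ j t`, the triple `(i, j, ε)` has length `|i| + |j| + 1` if `ε = 1`, `|i|` if
`j = 0 = ε`, and `|i| + |j| + 2` otherwise. A letter changes this length by at most one, so
geodesics are closed under taking suffixes, and prepending a letter to one of `a^x`, `a^x t a^y`,
`a^x t a^y t a^z` (`y ≠ 0`, `x z ≥ 0`) yields a geodesic only inside this family. Counting
the exponents of these words of length `n` gives
`2 + 4 (n - 1) + 2 ((n - 3)² + 3 (n - 3) + 1) = 2n² - 2n` for `n ≥ 3`, and at most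
`(2n + 1) + (2n + 1)² + (2n + 1)³` geodesics of length at most `n`.
-/

namespace G1

inductive Letter
  | a
  | aInv
  | t
  deriving DecidableEq

/-- `(i, j, ε)` encodes the element `a ^ i * b ^ j * t ^ ε`, and `c.act` is left
multiplication by the letter `c`. -/
def Letter.act : Letter → ℤ × ℤ × Bool → ℤ × ℤ × Bool
  | .a, (i, j, ε) => (i + 1, j, ε)
  | .aInv, (i, j, ε) => (i - 1, j, ε)
  | .t, (i, j, ε) => (j, i, !ε)

def normalForm (w : List Letter) : ℤ × ℤ × Bool :=
  w.foldr Letter.act (0, 0, false)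

def wordLength : ℤ × ℤ × Bool → ℕ
  | (i, j, true) => i.natAbs + j.natAbs + 1
  | (i, j, false) => if j = 0 then i.natAbs else i.natAbs + j.natAbs + 2

def IsGeodesic (w : List Letter) : Prop :=
  ∀ w' : List Letter, normalForm w' = normalForm w → w.length ≤ w'.length

@[simp] lemma normalForm_nil : normalForm [] = (0, 0, false) := rfl

@[simp] lemma normalForm_cons (c : Letter) (w : List Letter) :
    normalForm (c :: w) = c.act (normalForm w) := rfl

lemma wordLength_act_le (c : Letter) (p : ℤ × ℤ × Bool) :
    wordLength (c.act p) ≤ wordLength p + 1 := by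
  obtain ⟨i, j, _ | _⟩ := p <;> cases c <;>
    simp only [Letter.act, wordLength, Bool.not_true, Bool.not_false] <;> (try split_ifs) <;> omega

lemma wordLength_normalForm_le (w : List Letter) : wordLength (normalForm w) ≤ w.length := by
  induction w with
  | nil => rfl
  | cons c w ih => simpa using (wordLength_act_le c _).trans (by omega)

def word₀ (x : ℤ) : List Letter := List.replicate x.natAbs (if 0 ≤ x then .a else .aInv)

def word₁ (x y : ℤ) : List Letter := word₀ x ++ .t :: word₀ y

def word₂ (x y z : ℤ) : List Letter := word₀ x ++ .t :: word₁ y z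

@[simp] lemma length_word₀ (x : ℤ) : (word₀ x).length = x.natAbs := by simp [word₀]

@[simp] lemma length_word₁ (x y : ℤ) : (word₁ x y).length = x.natAbs + y.natAbs + 1 := by
  simp [word₁, add_assoc]

@[simp] lemma length_word₂ (x y z : ℤ) :
    (word₂ x y z).length = x.natAbs + y.natAbs + z.natAbs + 2 := by
  simp only [word₂, List.length_append, List.length_cons, length_word₀, length_word₁]
  omega

@[simp] lemma t_notMem_word₀ (x : ℤ) : Letter.t ∉ word₀ x := by
  unfold word₀; split_ifs <;> simp

@[simp] lemma word₀_zero : word₀ 0 = [] := rfl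

lemma cons_a_word₀ {x : ℤ} (hx : 0 ≤ x) : .a :: word₀ x = word₀ (x + 1) := by
  simp only [word₀, if_pos hx, if_pos (by omega : 0 ≤ x + 1),
    show (x + 1).natAbs = x.natAbs + 1 by omega, List.replicate_succ]

lemma cons_aInv_word₀ {x : ℤ} (hx : x ≤ 0) : .aInv :: word₀ x = word₀ (x - 1) := by
  rcases hx.lt_or_eq with hx | rfl
  · simp only [word₀, if_neg hx.not_ge, if_neg (by omega : ¬ 0 ≤ x - 1),
      show (x - 1).natAbs = x.natAbs + 1 by omega, List.replicate_succ]
  · rfl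

lemma foldr_act_word₀ (x : ℤ) (p : ℤ × ℤ × Bool) :
    (word₀ x).foldr Letter.act p = (p.1 + x, p.2) := by
  obtain ⟨n, rfl | rfl⟩ := Int.eq_nat_or_neg x
  · induction n with
    | zero => simp
    | succ n ih =>
      rw [Nat.cast_succ, ← cons_a_word₀ (by omega), List.foldr_cons, ih, ← add_assoc]
      rfl
  · induction n with
    | zero => simp
    | succ n ih =>
      rw [Nat.cast_succ, neg_add, ← sub_eq_add_neg, ← cons_aInv_word₀ (by omega),
        List.foldr_cons, ih, ← add_sub_assoc]
      rfl

@[simp] lemma normalForm_word₀ (x : ℤ) : normalForm (word₀ x) = (x, 0, false) := by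
  simp [normalForm, foldr_act_word₀]

@[simp] lemma normalForm_word₁ (x y : ℤ) : normalForm (word₁ x y) = (x, y, true) := by
  simp [normalForm, word₁, foldr_act_word₀, Letter.act]

@[simp] lemma normalForm_word₂ (x y z : ℤ) : normalForm (word₂ x y z) = (x + z, y, false) := by
  simp [normalForm, word₂, word₁, foldr_act_word₀, Letter.act, add_comm]

def InLanguage (w : List Letter) : Prop :=
  (∃ x, w = word₀ x) ∨ (∃ x y, w = word₁ x y) ∨ ∃ x y z, y ≠ 0 ∧ 0 ≤ x * z ∧ w = word₂ x y z

lemma exists_normalForm_eq_length_eq (p : ℤ × ℤ × Bool) :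
    ∃ w, normalForm w = p ∧ w.length = wordLength p := by
  obtain ⟨i, j, _ | _⟩ := p
  · by_cases hj : j = 0
    · exact ⟨word₀ i, by simp [hj], by simp [wordLength, hj]⟩
    · exact ⟨word₂ i j 0, by simp, by simp [wordLength, hj]⟩
  · exact ⟨word₁ i j, by simp, by simp [wordLength]⟩

lemma isGeodesic_iff_length_eq {w : List Letter} :
    IsGeodesic w ↔ w.length = wordLength (normalForm w) := by
  refine ⟨fun h => ?_, fun h w' hw' => h ▸ hw' ▸ wordLength_normalForm_le w'⟩
  obtain ⟨w', hw', hlen⟩ := exists_normalForm_eq_length_eq (normalForm w)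
  exact le_antisymm (hlen ▸ h w' hw') (wordLength_normalForm_le w)

lemma InLanguage.length_eq {w : List Letter} (h : InLanguage w) :
    w.length = wordLength (normalForm w) := by
  rcases h with ⟨x, rfl⟩ | ⟨x, y, rfl⟩ | ⟨x, y, z, hy, hxz, rfl⟩
  · simp [wordLength]
  · simp [wordLength]
  · rw [mul_nonneg_iff] at hxz
    simp only [length_word₂, normalForm_word₂, wordLength, if_neg hy]
    omega

lemma InLanguage.cons {c : Letter} {w : List Letter} (hw : InLanguage w)
    (h : (c :: w).length = wordLength (normalForm (c :: w))) : InLanguage (c :: w) := by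
  rcases hw with ⟨x, rfl⟩ | ⟨x, y, rfl⟩ | ⟨x, y, z, hy, hxz, rfl⟩ <;>
    cases c <;> simp only [List.length_cons, normalForm_cons, length_word₀, length_word₁,
      length_word₂, normalForm_word₀, normalForm_word₁, normalForm_word₂, Letter.act,
      wordLength, Bool.not_true, Bool.not_false, ↓reduceIte] at h
  · exact .inl ⟨x + 1, cons_a_word₀ (by omega)⟩
  · exact .inl ⟨x - 1, cons_aInv_word₀ (by omega)⟩
  · exact .inr (.inl ⟨0, x, rfl⟩)
  · exact .inr (.inl ⟨x + 1, y, by rw [word₁, ← List.cons_append, cons_a_word₀ (by omega)]; rfl⟩)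
  · exact .inr (.inl ⟨x - 1, y, by rw [word₁, ← List.cons_append, cons_aInv_word₀ (by omega)]; rfl⟩)
  · split_ifs at h with hx
    · omega
    · exact .inr (.inr ⟨0, x, y, hx, by simp, rfl⟩)
  · rw [if_neg hy] at h
    exact .inr (.inr ⟨x + 1, y, z, hy, mul_nonneg (by omega) (by omega),
      by rw [word₂, ← List.cons_append, cons_a_word₀ (by omega)]; rfl⟩)
  · rw [if_neg hy] at h
    exact .inr (.inr ⟨x - 1, y, z, hy, mul_nonneg_of_nonpos_of_nonpos (by omega) (by omega),
      by rw [word₂, ← List.cons_append, cons_aInv_word₀ (by omega)]; rfl⟩)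
  · omega

lemma inLanguage_of_length_eq {w : List Letter} (h : w.length = wordLength (normalForm w)) :
    InLanguage w := by
  induction w with
  | nil => exact .inl ⟨0, rfl⟩
  | cons c w ih =>
    refine (ih ?_).cons h
    have := wordLength_act_le c (normalForm w)
    have := wordLength_normalForm_le w
    simp only [List.length_cons, normalForm_cons] at h
    omega

theorem isGeodesic_iff_inLanguage {w : List Letter} : IsGeodesic w ↔ InLanguage w :=
  isGeodesic_iff_length_eq.trans ⟨inLanguage_of_length_eq, InLanguage.length_eq⟩

open Finset

lemma word₀_injective : Function.Injective word₀ := fun x x' h => by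
  simpa using congrArg normalForm h

lemma word₁_injective : Function.Injective fun p : ℤ × ℤ => word₁ p.1 p.2 := fun p q h => by
  simpa [Prod.ext_iff] using congrArg normalForm h

lemma word₀_append_t_cons_inj {x x' : ℤ} {u u' : List Letter}
    (h : word₀ x ++ .t :: u = word₀ x' ++ .t :: u') : x = x' ∧ u = u' := by
  have hlen : (word₀ x).length = (word₀ x').length := by
    simpa [List.idxOf_append_of_notMem] using congrArg (List.idxOf .t) h
  obtain ⟨h₀, h₁⟩ := List.append_inj h hlen
  exact ⟨word₀_injective h₀, List.cons_injective h₁⟩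

lemma word₂_injective :
    Function.Injective fun p : ℤ × ℤ × ℤ => word₂ p.1 p.2.1 p.2.2 := fun p q h => by
  obtain ⟨hx, hyz⟩ := word₀_append_t_cons_inj h
  exact Prod.ext hx (word₁_injective hyz)

noncomputable def l1Sphere (r : ℕ) : Finset (ℤ × ℤ) :=
  (Icc (-(r : ℤ)) r ×ˢ Icc (-(r : ℤ)) r).filter fun p => p.1.natAbs + p.2.natAbs = r

noncomputable def sameSignSphere (r : ℕ) : Finset (ℤ × ℤ) :=
  (l1Sphere r).filter fun p => 0 ≤ p.1 * p.2

noncomputable def sameSignBall (s : ℕ) : Finset (ℤ × ℤ) :=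
  (Icc (-(s : ℤ)) s ×ˢ Icc (-(s : ℤ)) s).filter
    fun p => p.1.natAbs + p.2.natAbs ≤ s ∧ 0 ≤ p.1 * p.2

lemma card_l1Sphere {r : ℕ} (hr : r ≠ 0) : #(l1Sphere r) = 4 * r := by
  have hsplit : l1Sphere r = (Icc (-(r : ℤ)) r).image (fun x : ℤ => (x, r - (x.natAbs : ℤ))) ∪
      (Ioo (-(r : ℤ)) r).image (fun x : ℤ => (x, (x.natAbs : ℤ) - r)) := by
    ext ⟨x, y⟩
    simp only [l1Sphere, mem_filter, mem_product, mem_Icc, mem_union, mem_image, mem_Ioo,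
      Prod.mk.injEq]
    constructor
    · rintro ⟨-, h⟩
      rcases le_or_gt 0 y with hy | hy
      · exact .inl ⟨x, by omega⟩
      · exact .inr ⟨x, by omega⟩
    · rintro (⟨x, hx, rfl, rfl⟩ | ⟨x, hx, rfl, rfl⟩) <;> omega
  have hinj {f : ℤ → ℤ} : Function.Injective fun x => (x, f x) :=
    Function.LeftInverse.injective (g := Prod.fst) fun _ => rfl
  rw [hsplit, card_union_of_disjoint, card_image_of_injective _ hinj,
    card_image_of_injective _ hinj, Int.card_Icc, Int.card_Ioo]
  · omega
  · simp only [disjoint_left, mem_image, mem_Icc, mem_Ioo, not_exists, not_and]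
    rintro _ ⟨x, hx, rfl⟩ x' hx' h
    simp only [Prod.mk.injEq] at h
    omega

lemma card_sameSignSphere {r : ℕ} (hr : r ≠ 0) : #(sameSignSphere r) = 2 * r + 2 := by
  have hsplit : sameSignSphere r = (Icc 0 (r : ℤ)).image (fun x : ℤ => (x, (r : ℤ) - x)) ∪
      (Icc (-(r : ℤ)) 0).image (fun x : ℤ => (x, -(r : ℤ) - x)) := by
    ext ⟨x, y⟩
    simp only [sameSignSphere, l1Sphere, mem_filter, mem_product, mem_Icc, mem_union,
      mem_image, Prod.mk.injEq, mul_nonneg_iff]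
    constructor
    · rintro ⟨⟨-, h⟩, hxy⟩
      rcases hxy with hxy | hxy
      · exact .inl ⟨x, by omega⟩
      · exact .inr ⟨x, by omega⟩
    · rintro (⟨x, hx, rfl, rfl⟩ | ⟨x, hx, rfl, rfl⟩) <;> omega
  have hinj {f : ℤ → ℤ} : Function.Injective fun x => (x, f x) :=
    Function.LeftInverse.injective (g := Prod.fst) fun _ => rfl
  rw [hsplit, card_union_of_disjoint, card_image_of_injective _ hinj,
    card_image_of_injective _ hinj, Int.card_Icc, Int.card_Icc]
  · omega
  · simp only [disjoint_left, mem_image, mem_Icc, not_exists, not_and]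
    rintro _ ⟨x, hx, rfl⟩ x' hx' h
    simp only [Prod.mk.injEq] at h
    omega

lemma card_sameSignBall (s : ℕ) : #(sameSignBall s) = s ^ 2 + 3 * s + 1 := by
  induction s with
  | zero =>
    rw [show sameSignBall 0 = {(0, 0)} by
      ext ⟨x, y⟩; simp only [sameSignBall, mem_filter, mem_product, mem_Icc, mem_singleton,
        Prod.mk.injEq]
      exact ⟨fun h => by omega, by rintro ⟨rfl, rfl⟩; simp⟩]
    rfl
  | succ s ih =>
    have hsplit : sameSignBall (s + 1) = sameSignBall s ∪ sameSignSphere (s + 1) := by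
      ext ⟨x, y⟩
      simp only [sameSignBall, sameSignSphere, l1Sphere, mem_filter, mem_product, mem_Icc,
        mem_union]
      push_cast
      omega
    have hdisj : Disjoint (sameSignBall s) (sameSignSphere (s + 1)) := by
      simp only [disjoint_left, sameSignBall, sameSignSphere, l1Sphere, mem_filter]
      omega
    rw [hsplit, card_union_of_disjoint hdisj, ih, card_sameSignSphere (by omega : s + 1 ≠ 0)]
    ring

noncomputable def geodesicTriples (m : ℕ) : Finset (ℤ × ℤ × ℤ) :=
  (Icc (-(m : ℤ)) m ×ˢ Icc (-(m : ℤ)) m ×ˢ Icc (-(m : ℤ)) m).filter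
    fun p => p.1.natAbs + p.2.1.natAbs + p.2.2.natAbs = m ∧ p.2.1 ≠ 0 ∧ 0 ≤ p.1 * p.2.2

lemma card_geodesicTriples (s : ℕ) : #(geodesicTriples (s + 1)) = 2 * (s ^ 2 + 3 * s + 1) := by
  let middle (p : ℤ × ℤ) : ℤ := s + 1 - p.1.natAbs - p.2.natAbs
  have hsplit : geodesicTriples (s + 1) =
      (sameSignBall s).image (fun p => (p.1, middle p, p.2)) ∪
        (sameSignBall s).image (fun p => (p.1, -middle p, p.2)) := by
    ext ⟨x, y, z⟩
    simp only [geodesicTriples, sameSignBall, middle, mem_filter, mem_product, mem_Icc,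
      mem_union, mem_image, Prod.exists, Prod.mk.injEq]
    constructor
    · rintro ⟨-, h, hy, hxz⟩
      rcases lt_or_gt_of_ne hy with hy | hy
      · exact .inr ⟨x, z, ⟨⟨by omega, by omega⟩, by omega, hxz⟩, rfl, by omega, rfl⟩
      · exact .inl ⟨x, z, ⟨⟨by omega, by omega⟩, by omega, hxz⟩, rfl, by omega, rfl⟩
    · rintro (⟨x, z, ⟨-, h, hxz⟩, rfl, rfl, rfl⟩ | ⟨x, z, ⟨-, h, hxz⟩, rfl, rfl, rfl⟩) <;>
        exact ⟨by omega, by omega, by omega, hxz⟩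
  have hinj {f : ℤ × ℤ → ℤ} : Function.Injective fun p : ℤ × ℤ => (p.1, f p, p.2) :=
    Function.LeftInverse.injective (g := fun q => (q.1, q.2.2)) fun _ => rfl
  rw [hsplit, card_union_of_disjoint, card_image_of_injective _ hinj,
    card_image_of_injective _ hinj, card_sameSignBall]
  · ring
  · simp only [disjoint_left, mem_image, not_exists, not_and]
    rintro _ ⟨p, hp, rfl⟩ q hq h
    simp only [sameSignBall, middle, mem_filter, Prod.mk.injEq] at hp hq h
    omega

lemma setOf_isGeodesic_length_eq (m : ℕ) :
    {w | IsGeodesic w ∧ w.length = m + 2} =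
      ↑(({((m + 2 : ℕ) : ℤ), -((m + 2 : ℕ) : ℤ)} : Finset ℤ).image word₀ ∪
        (l1Sphere (m + 1)).image (fun p => word₁ p.1 p.2) ∪
        (geodesicTriples m).image (fun p => word₂ p.1 p.2.1 p.2.2)) := by
  ext w
  simp only [Set.mem_ofPred_eq, isGeodesic_iff_inLanguage, InLanguage, coe_union, coe_image,
    Set.mem_union, Set.mem_image, mem_coe, l1Sphere, geodesicTriples, mem_filter, mem_product,
    mem_Icc, mem_insert, mem_singleton, Prod.exists]
  constructor
  · rintro ⟨⟨x, rfl⟩ | ⟨x, y, rfl⟩ | ⟨x, y, z, hy, hxz, rfl⟩, hlen⟩ <;>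
      simp only [length_word₀, length_word₁, length_word₂] at hlen
    · exact .inl (.inl ⟨x, by omega, rfl⟩)
    · exact .inl (.inr ⟨x, y, ⟨⟨⟨by omega, by omega⟩, by omega, by omega⟩, by omega⟩, rfl⟩)
    · exact .inr ⟨x, y, z, ⟨⟨⟨by omega, by omega⟩, ⟨by omega, by omega⟩, by omega, by omega⟩,
        by omega, hy, hxz⟩, rfl⟩
  · rintro ((⟨x, hx, rfl⟩ | ⟨x, y, ⟨-, h⟩, rfl⟩) | ⟨x, y, z, ⟨-, h, hy, hxz⟩, rfl⟩)
    · exact ⟨.inl ⟨x, rfl⟩, by simp only [length_word₀]; omega⟩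
    · exact ⟨.inr (.inl ⟨x, y, rfl⟩), by simp only [length_word₁]; omega⟩
    · exact ⟨.inr (.inr ⟨x, y, z, hy, hxz, rfl⟩), by simp only [length_word₂]; omega⟩

theorem ncard_setOf_isGeodesic_length_eq {n : ℕ} (hn : 3 ≤ n) :
    {w | IsGeodesic w ∧ w.length = n}.ncard = 2 * n ^ 2 - 2 * n := by
  obtain ⟨s, rfl⟩ : ∃ s, n = s + 1 + 2 := ⟨n - 3, by omega⟩
  rw [setOf_isGeodesic_length_eq, Set.ncard_coe_finset, card_union_of_disjoint,
    card_union_of_disjoint, card_image_of_injective _ word₀_injective,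
    card_image_of_injective _ word₁_injective, card_image_of_injective _ word₂_injective,
    card_pair (by omega), card_l1Sphere (by omega), card_geodesicTriples]
  · exact (Nat.sub_eq_of_eq_add (by ring)).symm
  all_goals
    simp only [disjoint_left, mem_union, mem_image, not_exists, not_and]
  · rintro _ ⟨x, -, rfl⟩ p - h
    simpa using congrArg normalForm h
  · rintro _ (⟨x, -, rfl⟩ | ⟨p, -, rfl⟩) q hq h <;> have h' := congrArg normalForm h
    · simp only [geodesicTriples, mem_filter] at hq
      simp only [normalForm_word₀, normalForm_word₂, Prod.mk.injEq] at h'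
      exact hq.2.2.1 h'.2.1
    · simp at h'

lemma setOf_isGeodesic_length_le_subset (n : ℕ) :
    {w | IsGeodesic w ∧ w.length ≤ n} ⊆
      ↑((Icc (-(n : ℤ)) n).image word₀ ∪
        (Icc (-(n : ℤ)) n ×ˢ Icc (-(n : ℤ)) n).image (fun p => word₁ p.1 p.2) ∪
        (Icc (-(n : ℤ)) n ×ˢ Icc (-(n : ℤ)) n ×ˢ Icc (-(n : ℤ)) n).image
          (fun p => word₂ p.1 p.2.1 p.2.2)) := by
  rintro w ⟨hw, hlen⟩
  simp only [coe_union, coe_image, Set.mem_union, Set.mem_image, mem_coe, mem_product, mem_Icc,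
    Prod.exists]
  rcases isGeodesic_iff_inLanguage.1 hw with ⟨x, rfl⟩ | ⟨x, y, rfl⟩ | ⟨x, y, z, -, -, rfl⟩ <;>
    simp only [length_word₀, length_word₁, length_word₂] at hlen
  · exact .inl (.inl ⟨x, by omega, rfl⟩)
  · exact .inl (.inr ⟨x, y, ⟨⟨by omega, by omega⟩, by omega, by omega⟩, rfl⟩)
  · exact .inr ⟨x, y, z, ⟨⟨by omega, by omega⟩, ⟨by omega, by omega⟩, by omega, by omega⟩, rfl⟩

theorem ncard_setOf_isGeodesic_length_le_le {n : ℕ} (hn : 1 ≤ n) :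
    {w | IsGeodesic w ∧ w.length ≤ n}.ncard ≤ 39 * n ^ 3 := by
  have hbox : #(Icc (-(n : ℤ)) n) = 2 * n + 1 := by rw [Int.card_Icc]; omega
  calc _ ≤ _ := Set.ncard_le_ncard (setOf_isGeodesic_length_le_subset n) (finite_toSet _)
    _ ≤ (2 * n + 1) + (2 * n + 1) ^ 2 + (2 * n + 1) ^ 3 := by
      rw [Set.ncard_coe_finset]
      refine (card_union_le _ _).trans (add_le_add ((card_union_le _ _).trans
        (add_le_add card_image_le card_image_le)) card_image_le) |>.trans ?_
      simp only [card_product, hbox]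
      exact le_of_eq (by ring)
    _ ≤ 3 * n + (3 * n) ^ 2 + (3 * n) ^ 3 := by gcongr <;> omega
    _ ≤ 39 * n ^ 3 := by
      have h₁ : n ^ 1 ≤ n ^ 3 := Nat.pow_le_pow_right hn (by norm_num)
      have h₂ : n ^ 2 ≤ n ^ 3 := Nat.pow_le_pow_right hn (by norm_num)
      linarith

section Group

variable {G : Type*} [Group G] {a b t : G}

def evalLetter (a t : G) : Letter → G
  | .a => a
  | .aInv => a⁻¹
  | .t => t

def toGroup (a b t : G) : ℤ × ℤ × Bool → G
  | (i, j, false) => a ^ i * b ^ j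
  | (i, j, true) => a ^ i * b ^ j * t

lemma range_evalLetter : Set.range (evalLetter a t) = {a, a⁻¹, t} := by
  ext g
  constructor
  · rintro ⟨_ | _ | _, rfl⟩ <;> simp [evalLetter]
  · rintro (rfl | rfl | rfl)
    exacts [⟨.a, rfl⟩, ⟨.aInv, rfl⟩, ⟨.t, rfl⟩]

lemma toGroup_act (hab : a * b = b * a) (ht : t * t = 1) (hconj : t * a * t = b)
    (c : Letter) (p : ℤ × ℤ × Bool) :
    toGroup a b t (c.act p) = evalLetter a t c * toGroup a b t p := by
  obtain ⟨i, j, ε⟩ := p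
  have hta : SemiconjBy t a b := by rw [SemiconjBy, ← hconj, mul_assoc, ht, mul_one]
  have htb : SemiconjBy t b a := by rw [SemiconjBy, ← hconj, ← mul_assoc, ← mul_assoc, ht, one_mul]
  have hswap : t * (a ^ i * b ^ j) = a ^ j * b ^ i * t := by
    rw [← mul_assoc, (hta.zpow_right i).eq, mul_assoc, (htb.zpow_right j).eq, ← mul_assoc,
      (Commute.zpow_zpow hab j i).eq]
  cases c <;> cases ε <;> simp only [Letter.act, toGroup, evalLetter, Bool.not_true, Bool.not_false]
  · group
  · group
  · group
  · group
  · exact hswap.symm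
  · rw [← mul_assoc, hswap, mul_assoc, ht, mul_one]

lemma prod_map_evalLetter (hab : a * b = b * a) (ht : t * t = 1) (hconj : t * a * t = b)
    (w : List Letter) : (w.map (evalLetter a t)).prod = toGroup a b t (normalForm w) := by
  induction w with
  | nil => simp [toGroup]
  | cons c w ih => rw [List.map_cons, List.prod_cons, ih, normalForm_cons, toGroup_act hab ht hconj]

lemma eq_and_eq_of_zpow_mul_zpow_eq (hfree : ∀ i j : ℤ, a ^ i * b ^ j = 1 → i = 0 ∧ j = 0)
    {i j i' j' : ℤ} (h : a ^ i * b ^ j = a ^ i' * b ^ j') : i = i' ∧ j = j' := by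
  have : a ^ (i - i') * b ^ (j - j') = 1 := by
    rw [show a ^ (i - i') * b ^ (j - j') = a ^ (-i') * (a ^ i * b ^ j) * b ^ (-j') by group, h]
    group
  have := hfree _ _ this
  omega

lemma toGroup_injective (hfree : ∀ i j : ℤ, a ^ i * b ^ j = 1 → i = 0 ∧ j = 0)
    (htH : t ∉ Subgroup.closure {a, b}) : Function.Injective (toGroup a b t) := by
  have hH (i j : ℤ) : a ^ i * b ^ j ∈ Subgroup.closure {a, b} :=
    mul_mem (zpow_mem (Subgroup.subset_closure (by simp)) _)
      (zpow_mem (Subgroup.subset_closure (by simp)) _)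
  have ht_ne {i j i' j' : ℤ} : a ^ i * b ^ j ≠ a ^ i' * b ^ j' * t := fun h =>
    htH (eq_inv_mul_of_mul_eq h.symm ▸ mul_mem (inv_mem (hH i' j')) (hH i j))
  rintro ⟨i, j, _ | _⟩ ⟨i', j', _ | _⟩ h <;> simp only [toGroup] at h
  · obtain ⟨rfl, rfl⟩ := eq_and_eq_of_zpow_mul_zpow_eq hfree h
    rfl
  · exact absurd h ht_ne
  · exact absurd h.symm ht_ne
  · obtain ⟨rfl, rfl⟩ := eq_and_eq_of_zpow_mul_zpow_eq hfree (mul_right_cancel h)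
    rfl

lemma evalLetter_injective (hfree : ∀ i j : ℤ, a ^ i * b ^ j = 1 → i = 0 ∧ j = 0)
    (htH : t ∉ Subgroup.closure {a, b}) : Function.Injective (evalLetter a t) := by
  have ha : a ∈ Subgroup.closure {a, b} := Subgroup.subset_closure (by simp)
  have ha_ne : a ≠ a⁻¹ := fun h => by
    have := hfree 2 0 (by rw [zpow_zero, mul_one, zpow_two]; nth_rw 2 [h]; exact mul_inv_cancel a)
    omega
  have ht_ne : a ≠ t := fun h => htH (h ▸ ha)
  have ht_ne' : a⁻¹ ≠ t := fun h => htH (h ▸ inv_mem ha)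
  intro c c' h
  cases c <;> cases c' <;> simp only [evalLetter] at h <;> first
    | rfl
    | exact absurd h ‹_›
    | exact absurd h.symm ‹_›

lemma isGeodesicWord_map_iff (hab : a * b = b * a) (ht : t * t = 1) (hconj : t * a * t = b)
    (hfree : ∀ i j : ℤ, a ^ i * b ^ j = 1 → i = 0 ∧ j = 0) (htH : t ∉ Subgroup.closure {a, b})
    {w : List Letter} : IsGeodesicWord {a, a⁻¹, t} (w.map (evalLetter a t)) ↔ IsGeodesic w := by
  have hX (u : List Letter) : ∀ g ∈ u.map (evalLetter a t), g ∈ ({a, a⁻¹, t} : Set G) := by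
    have hu := Set.mem_range_self (f := List.map (evalLetter a t)) u
    rwa [Set.range_list_map, range_evalLetter] at hu
  rw [IsGeodesicWord, and_iff_right (hX w)]
  constructor
  · intro h u hu
    have hprod : (u.map (evalLetter a t)).prod = (w.map (evalLetter a t)).prod := by
      rw [prod_map_evalLetter hab ht hconj, prod_map_evalLetter hab ht hconj, hu]
    simpa using h _ (hX u) hprod
  · intro h v hv hprod
    obtain ⟨u, rfl⟩ : v ∈ Set.range (List.map (evalLetter a t)) := by
      rwa [Set.range_list_map, range_evalLetter]
    rw [prod_map_evalLetter hab ht hconj, prod_map_evalLetter hab ht hconj] at hprod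
    simpa using h u (toGroup_injective hfree htH hprod)

lemma setOf_isGeodesicWord_eq_image (hab : a * b = b * a) (ht : t * t = 1)
    (hconj : t * a * t = b) (hfree : ∀ i j : ℤ, a ^ i * b ^ j = 1 → i = 0 ∧ j = 0)
    (htH : t ∉ Subgroup.closure {a, b}) (P : ℕ → Prop) :
    {w : List G | IsGeodesicWord {a, a⁻¹, t} w ∧ P w.length} =
      List.map (evalLetter a t) '' {w | IsGeodesic w ∧ P w.length} := by
  ext w
  constructor
  · rintro ⟨hw, hP⟩
    obtain ⟨u, rfl⟩ : w ∈ Set.range (List.map (evalLetter a t)) := by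
      rw [Set.range_list_map, range_evalLetter]
      exact hw.1
    exact ⟨u, ⟨(isGeodesicWord_map_iff hab ht hconj hfree htH).1 hw, by simpa using hP⟩, rfl⟩
  · rintro ⟨u, ⟨hu, hP⟩, rfl⟩
    exact ⟨(isGeodesicWord_map_iff hab ht hconj hfree htH).2 hu, by simpa using hP⟩

end Group

end G1

/-- In G₁ = ℤ² ⋊ C₂ (with C₂ swapping the basis a, b), characterized abstractly by the
presentation relations together with freeness of ⟨a,b⟩ ≅ ℤ² and t ∉ ⟨a,b⟩, the number of
geodesics of length n over {a, a⁻¹, t} is 2n² − 2n for n ≥ 5, and the geodesic growth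
is polynomial of degree 3. -/
theorem G1_polynomial_geodesic_growth {G : Type*} [Group G] (a b t : G)
    (hab : a * b = b * a) (ht : t * t = 1) (hconj : t * a * t = b)
    (hfree : ∀ i j : ℤ, a ^ i * b ^ j = 1 → i = 0 ∧ j = 0)
    (htH : t ∉ Subgroup.closure {a, b}) :
    (∀ n : ℕ, 5 ≤ n →
      Set.ncard {w : List G | IsGeodesicWord {a, a⁻¹, t} w ∧ w.length = n} =
        2 * n ^ 2 - 2 * n) ∧
    ∃ c : ℕ, ∀ n : ℕ, 1 ≤ n →
      geodesicGrowth ({a, a⁻¹, t} : Set G) n ≤ c * n ^ 3 := by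
  have hcount (P : ℕ → Prop) :
      {w : List G | IsGeodesicWord {a, a⁻¹, t} w ∧ P w.length}.ncard =
        {w : List G1.Letter | G1.IsGeodesic w ∧ P w.length}.ncard := by
    rw [G1.setOf_isGeodesicWord_eq_image hab ht hconj hfree htH, Set.ncard_image_of_injective _
      (List.map_injective_iff.2 (G1.evalLetter_injective hfree htH))]
  refine ⟨fun n hn => ?_, 39, fun n hn => ?_⟩
  · exact (hcount (· = n)).trans (G1.ncard_setOf_isGeodesic_length_eq (by omega))
  · exact (hcount (· ≤ n)).trans_le (G1.ncard_setOf_isGeodesic_length_le_le hn)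
end

section
/- The group G₂ = ℤ² ⋊ C₂, where C₂ acts by inversion (⟨a, b, t | [a,b]=1, t²=1, tat = a⁻¹, tbt = b⁻¹⟩), has exponential geodesic growth with respect to every finite symmetric generating set: for any finite symmetric generating set X there exists an element with at least C(2n, n) geodesic representatives of length 4n, for all n. -/
set_option linter.unusedSectionVars false
set_option linter.unusedVariables false
set_option maxHeartbeats 1000000


-- Piece A: 2^n ≤ C(2n, n)
lemma two_pow_le_centralBinom (n : ℕ) : 2 ^ n ≤ (2 * n).choose n := by
  induction n with
  | zero => simp
  | succ k ih =>
    have h := Nat.succ_mul_centralBinom_succ k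
    have h2 : (k + 1) * (2 ^ (k+1)) ≤ (k + 1) * (k+1).centralBinom := by
      calc (k+1) * 2 ^ (k+1) = 2 * (k+1) * 2 ^ k := by ring
        _ ≤ 2 * (2*k+1) * k.centralBinom := by
            apply Nat.mul_le_mul
            · omega
            · simpa [Nat.centralBinom] using ih
        _ = (k + 1) * (k+1).centralBinom := h.symm
    have := Nat.le_of_mul_le_mul_left h2 (by omega : 0 < k + 1)
    simpa [Nat.centralBinom] using this

-- Piece D: finiteness of bounded-length words over finite alphabet
lemma finite_words {G : Type*} (X : Finset G) (n : ℕ) :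
    {w : List G | (∀ a ∈ w, a ∈ X) ∧ w.length ≤ n}.Finite := by
  have h1 : {l : List {x // x ∈ X} | l.length ≤ n}.Finite := List.finite_length_le _ n
  apply Set.Finite.subset (h1.image (List.map Subtype.val))
  rintro w ⟨hw, hlen⟩
  refine ⟨w.attach.map (fun x => ⟨x.1, hw x.1 x.2⟩), by simpa using hlen, ?_⟩
  simp [List.map_map]



lemma plane_functional (T : Finset (ℤ × ℤ))
    (hsymm : ∀ v ∈ T, -v ∈ T)
    (hspan : ∃ u ∈ T, ∃ v ∈ T, u.1 * v.2 - u.2 * v.1 ≠ 0) :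
    ∃ (α β : ℝ) (u v : ℤ × ℤ), u ∈ T ∧ v ∈ T ∧ u ≠ v ∧
      (α * u.1 + β * u.2 = 1) ∧ (α * v.1 + β * v.2 = 1) ∧
      ∀ s ∈ T, α * s.1 + β * s.2 ≤ 1 := by
  classical
  obtain ⟨u₀, hu₀, v₀, hv₀, hcr⟩ := hspan
  have hTne : T.Nonempty := ⟨u₀, hu₀⟩
  obtain ⟨u, huT, humax⟩ := T.exists_max_image (fun s => s.1 ^ 2 + s.2 ^ 2) hTne
  have hu0 : u₀ ≠ (0, 0) := by rintro rfl; simp at hcr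
  have hupos : 0 < u.1 ^ 2 + u.2 ^ 2 := by
    have h1 := humax u₀ hu₀
    have h2 : 0 < u₀.1 ^ 2 + u₀.2 ^ 2 := by
      have : u₀.1 ≠ 0 ∨ u₀.2 ≠ 0 := by
        by_contra h; push_neg at h
        exact hu0 (Prod.ext_iff.2 ⟨h.1, h.2⟩)
      rcases this with h | h <;> positivity
    omega
  set N : ℝ := (u.1 : ℝ) ^ 2 + (u.2 : ℝ) ^ 2 with hN
  have hNpos : 0 < N := by
    have : ((u.1 ^ 2 + u.2 ^ 2 : ℤ) : ℝ) = N := by push_cast [hN]; ring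
    rw [← this]; exact_mod_cast hupos
  have hnorm : ∀ s ∈ T, (s.1 : ℝ) ^ 2 + (s.2 : ℝ) ^ 2 ≤ N := by
    intro s hs
    have := humax s hs
    rw [hN]; exact_mod_cast this
  have hg_le : ∀ s ∈ T, (s.1 : ℝ) * u.1 + s.2 * u.2 ≤ N := by
    intro s hs
    nlinarith [hnorm s hs, sq_nonneg ((s.1:ℝ) * u.2 - s.2 * u.1), hNpos,
      sq_nonneg ((s.1:ℝ) * u.1 + s.2 * u.2 - N)]
  have hg_lt : ∀ s ∈ T, (s.1 : ℝ) * u.2 - s.2 * u.1 ≠ 0 →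
      (s.1 : ℝ) * u.1 + s.2 * u.2 < N := by
    intro s hs hcross
    nlinarith [hnorm s hs, sq_pos_of_ne_zero hcross, hNpos,
      sq_nonneg ((s.1:ℝ) * u.1 + s.2 * u.2 - N), hg_le s hs]
  set D : Finset (ℤ × ℤ) := T.filter (fun s => 0 < s.1 * u.2 - s.2 * u.1) with hD
  by_cases hDne : D.Nonempty
  · obtain ⟨v, hvD, hvmin⟩ := D.exists_min_image
      (fun s => (1 - ((s.1:ℝ) * u.1 + s.2 * u.2)/N) / ((s.1:ℝ) * u.2 - s.2 * u.1)) hDne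
    have hvT : v ∈ T := (Finset.mem_filter.1 hvD).1
    have hvcrZ : 0 < v.1 * u.2 - v.2 * u.1 := (Finset.mem_filter.1 hvD).2
    have hvcr : 0 < (v.1 : ℝ) * u.2 - v.2 * u.1 := by exact_mod_cast hvcrZ
    set ε : ℝ := (1 - ((v.1:ℝ) * u.1 + v.2 * u.2)/N) / ((v.1:ℝ) * u.2 - v.2 * u.1) with hε
    have hεpos : 0 < ε := by
      apply div_pos _ hvcr
      have h1 := hg_lt v hvT (ne_of_gt hvcr)
      have h2 : ((v.1:ℝ) * u.1 + v.2 * u.2)/N < 1 := (div_lt_one hNpos).2 h1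
      linarith
    refine ⟨u.1 / N + ε * u.2, u.2 / N - ε * u.1, u, v, huT, hvT, ?_, ?_, ?_, ?_⟩
    · rintro rfl
      have : u.1 * u.2 - u.2 * u.1 = 0 := by ring
      omega
    · field_simp; ring
    · have hform : (u.1 / N + ε * u.2) * v.1 + (u.2 / N - ε * u.1) * v.2
          = ((v.1:ℝ) * u.1 + v.2 * u.2)/N + ε * ((v.1:ℝ) * u.2 - v.2 * u.1) := by
        field_simp; ring
      rw [hform, hε, div_mul_cancel₀ _ (ne_of_gt hvcr)]
      ring
    · intro s hs
      have hform : (u.1 / N + ε * u.2) * s.1 + (u.2 / N - ε * u.1) * s.2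
          = ((s.1:ℝ) * u.1 + s.2 * u.2)/N + ε * ((s.1:ℝ) * u.2 - s.2 * u.1) := by
        field_simp; ring
      rw [hform]
      by_cases hcs : 0 < s.1 * u.2 - s.2 * u.1
      · have hsD : s ∈ D := Finset.mem_filter.2 ⟨hs, hcs⟩
        have hcsR : 0 < (s.1:ℝ) * u.2 - s.2 * u.1 := by exact_mod_cast hcs
        have hmin : ε ≤ (1 - ((s.1:ℝ) * u.1 + s.2 * u.2)/N) / ((s.1:ℝ) * u.2 - s.2 * u.1) :=
          hvmin s hsD
        have h2 : ε * ((s.1:ℝ) * u.2 - s.2 * u.1) ≤ 1 - ((s.1:ℝ) * u.1 + s.2 * u.2)/N :=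
          (le_div_iff₀ hcsR).1 hmin
        linarith
      · have hcsR : (s.1:ℝ) * u.2 - s.2 * u.1 ≤ 0 := by
          push_neg at hcs
          have : (s.1 * u.2 - s.2 * u.1 : ℤ) ≤ 0 := by omega
          exact_mod_cast this
        have h1 : ((s.1:ℝ) * u.1 + s.2 * u.2)/N ≤ 1 := (div_le_one hNpos).2 (hg_le s hs)
        nlinarith
  · exfalso
    have hall : ∀ s ∈ T, s.1 * u.2 - s.2 * u.1 = 0 := by
      intro s hs
      have h1 : ¬ (0 < s.1 * u.2 - s.2 * u.1) := fun h =>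
        hDne ⟨s, Finset.mem_filter.2 ⟨hs, h⟩⟩
      have h2 : ¬ (0 < (-s).1 * u.2 - (-s).2 * u.1) := fun h =>
        hDne ⟨-s, Finset.mem_filter.2 ⟨hsymm s hs, h⟩⟩
      simp only [Prod.fst_neg, Prod.snd_neg, neg_mul] at h2
      omega
    have h1 := hall u₀ hu₀
    have h2 := hall v₀ hv₀
    have hune : u ≠ (0,0) := by
      rintro hu; rw [hu] at hupos; simp at hupos
    have k1 : (u₀.1 * v₀.2 - u₀.2 * v₀.1) * u.1 = 0 := by linear_combination v₀.1 * h1 - u₀.1 * h2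
    have k2 : (u₀.1 * v₀.2 - u₀.2 * v₀.1) * u.2 = 0 := by linear_combination v₀.2 * h1 - u₀.2 * h2
    have hu1 : u.1 ≠ 0 ∨ u.2 ≠ 0 := by
      by_contra h; push_neg at h; exact hune (Prod.ext_iff.2 ⟨h.1, h.2⟩)
    rcases hu1 with h | h
    · exact hcr ((mul_eq_zero.1 k1).resolve_right h)
    · exact hcr ((mul_eq_zero.1 k2).resolve_right h)



section Blocks
variable {G : Type*} [Group G] (B₁ B₂ : List G)

def blockWord (l : List Bool) : List G := (l.map fun b => if b then B₁ else B₂).flatten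

lemma blockWord_length (h₁ : B₁.length = 2) (h₂ : B₂.length = 2) (l : List Bool) :
    (blockWord B₁ B₂ l).length = 2 * l.length := by
  induction l with
  | nil => simp [blockWord]
  | cons x l ih =>
    cases x <;> simp [blockWord, List.flatten_cons, h₁, h₂] at ih ⊢ <;> omega

lemma blockWord_injective (h₁ : B₁.length = 2) (h₂ : B₂.length = 2) (hne : B₁ ≠ B₂) :
    Function.Injective (blockWord B₁ B₂) := by
  intro l₁ l₂ heq
  induction l₁ generalizing l₂ with
  | nil =>
    cases l₂ with
    | nil => rfl
    | cons y l₂ =>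
      exfalso
      have := congrArg List.length heq
      rw [blockWord_length _ _ h₁ h₂, blockWord_length _ _ h₁ h₂] at this
      simp at this
  | cons x l₁ ih =>
    cases l₂ with
    | nil =>
      exfalso
      have := congrArg List.length heq
      rw [blockWord_length _ _ h₁ h₂, blockWord_length _ _ h₁ h₂] at this
      simp at this
    | cons y l₂ =>
      have hx : blockWord B₁ B₂ (x :: l₁) = (if x then B₁ else B₂) ++ blockWord B₁ B₂ l₁ := by
        simp [blockWord]
      have hy : blockWord B₁ B₂ (y :: l₂) = (if y then B₁ else B₂) ++ blockWord B₁ B₂ l₂ := by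
        simp [blockWord]
      rw [hx, hy] at heq
      have hlen : (if x then B₁ else B₂).length = (if y then B₁ else B₂).length := by
        cases x <;> cases y <;> simp [h₁, h₂]
      obtain ⟨hb, ht⟩ := List.append_inj heq hlen
      have hxy : x = y := by
        cases x <;> cases y <;> simp at hb <;> first | rfl | exact absurd hb (Ne.symm hne) | exact absurd hb hne
      rw [hxy, ih ht]

lemma blockWord_prod (s₁ s₂ : G) (hp₁ : B₁.prod = s₁) (hp₂ : B₂.prod = s₂)
    (hcomm : Commute s₁ s₂) (l : List Bool) :
    (blockWord B₁ B₂ l).prod = s₁ ^ (l.count true) * s₂ ^ (l.count false) := by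
  induction l with
  | nil => simp [blockWord]
  | cons x l ih =>
    have : (blockWord B₁ B₂ (x :: l)).prod
        = (if x then B₁ else B₂).prod * (blockWord B₁ B₂ l).prod := by
      simp [blockWord]
    rw [this, ih]
    cases x
    · have hc : ((false :: l).count true) = l.count true := by simp
      have hd : ((false :: l).count false) = l.count false + 1 := by simp
      rw [if_neg (by simp), hp₂, hc, hd]
      calc s₂ * (s₁ ^ l.count true * s₂ ^ l.count false)
          = (s₂ * s₁ ^ l.count true) * s₂ ^ l.count false := (mul_assoc _ _ _).symm
        _ = (s₁ ^ l.count true * s₂) * s₂ ^ l.count false := by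
            rw [(hcomm.symm.pow_right (l.count true)).eq]
        _ = s₁ ^ l.count true * (s₂ * s₂ ^ l.count false) := mul_assoc _ _ _
        _ = s₁ ^ l.count true * s₂ ^ (l.count false + 1) := by rw [← pow_succ']
    · have hc : ((true :: l).count true) = l.count true + 1 := by simp
      have hd : ((true :: l).count false) = l.count false := by simp
      rw [if_pos rfl, hp₁, hc, hd, ← mul_assoc, ← pow_succ']

lemma blockWord_mem (l : List Bool) (x : G) (hx : x ∈ blockWord B₁ B₂ l) :
    x ∈ B₁ ∨ x ∈ B₂ := by
  simp only [blockWord, List.mem_flatten, List.mem_map] at hx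
  obtain ⟨L, ⟨b, _, rfl⟩, hxL⟩ := hx
  cases b <;> simp_all

end Blocks

-- Bool lists of length m with exactly k trues, via powersetCard
lemma count_true_ofFn_mem {m : ℕ} (A : Finset (Fin m)) :
    (List.ofFn (fun i => decide (i ∈ A))).count true = A.card := by
  classical
  rw [List.ofFn_eq_map, List.count, List.countP_map]
  have h1 : ((fun b => b == true) ∘ fun i => decide (i ∈ A)) = fun i => decide (i ∈ A) := by
    funext i; simp
  rw [h1]
  have h2 : A = Finset.univ.filter (fun i => i ∈ A) := by ext i; simp
  conv_rhs => rw [h2]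
  rw [Fin.univ_def]
  simp [Finset.filter, Finset.card, List.countP_eq_length_filter]

lemma ofFn_mem_injective {m : ℕ} :
    Function.Injective (fun A : Finset (Fin m) => List.ofFn (fun i => decide (i ∈ A))) := by
  intro A B h
  rw [List.ofFn_inj] at h
  ext i
  have := congrFun h i
  simpa using this



namespace G2aux
variable {G : Type*} [Group G]

lemma mul_form {a b : G} (hab : a * b = b * a) (i j k l : ℤ) :
    (a ^ i * b ^ j) * (a ^ k * b ^ l) = a ^ (i + k) * b ^ (j + l) := by
  have hc : Commute a b := hab
  have h1 : b ^ j * a ^ k = a ^ k * b ^ j := ((hc.symm).zpow_zpow j k).eq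
  rw [zpow_add, zpow_add]
  calc a ^ i * b ^ j * (a ^ k * b ^ l) = a ^ i * (b ^ j * a ^ k) * b ^ l := by group
    _ = a ^ i * (a ^ k * b ^ j) * b ^ l := by rw [h1]
    _ = a ^ i * a ^ k * (b ^ j * b ^ l) := by group

lemma mem_H_iff {a b : G} (hab : a * b = b * a) (g : G) :
    g ∈ Subgroup.closure {a, b} ↔ ∃ i j : ℤ, g = a ^ i * b ^ j := by
  have hc : Commute a b := hab
  constructor
  · intro hg
    refine Subgroup.closure_induction ?_ ⟨0, 0, by simp⟩ ?_ ?_ hg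
    · rintro x (rfl | rfl)
      · exact ⟨1, 0, by simp⟩
      · exact ⟨0, 1, by simp⟩
    · rintro x y - - ⟨i, j, rfl⟩ ⟨k, l, rfl⟩
      exact ⟨i + k, j + l, mul_form hab i j k l⟩
    · rintro x - ⟨i, j, rfl⟩
      refine ⟨-i, -j, ?_⟩
      have h1 : b ^ (-j) * a ^ (-i) = a ^ (-i) * b ^ (-j) := ((hc.symm).zpow_zpow _ _).eq
      rw [mul_inv_rev, ← zpow_neg, ← zpow_neg, h1]
  · rintro ⟨i, j, rfl⟩
    exact mul_mem (zpow_mem (Subgroup.subset_closure (by simp)) i)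
      (zpow_mem (Subgroup.subset_closure (by simp)) j)

lemma rep_unique {a b : G} (hab : a * b = b * a)
    (hfree : ∀ i j : ℤ, a ^ i * b ^ j = 1 → i = 0 ∧ j = 0)
    {i j k l : ℤ} (h : a ^ i * b ^ j = a ^ k * b ^ l) : i = k ∧ j = l := by
  have h1 : a ^ (i - k) * b ^ (j - l) = 1 := by
    have e1 : a ^ (i - k) = a ^ (-k) * a ^ i := by group
    have e2 : b ^ (j - l) = b ^ j * b ^ (-l) := by group
    rw [e1, e2]
    calc a ^ (-k) * a ^ i * (b ^ j * b ^ (-l)) = a ^ (-k) * (a ^ i * b ^ j) * b ^ (-l) := by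
          group
      _ = a ^ (-k) * (a ^ k * b ^ l) * b ^ (-l) := by rw [h]
      _ = 1 := by group
  obtain ⟨h6, h7⟩ := hfree _ _ h1
  omega

lemma H_comm {a b : G} (hab : a * b = b * a) {g g' : G}
    (hg : g ∈ Subgroup.closure {a, b}) (hg' : g' ∈ Subgroup.closure {a, b}) :
    g * g' = g' * g := by
  obtain ⟨i, j, rfl⟩ := (mem_H_iff hab g).1 hg
  obtain ⟨k, l, rfl⟩ := (mem_H_iff hab g').1 hg'
  rw [mul_form hab, mul_form hab, add_comm i k, add_comm j l]


open Classical in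
noncomputable def coord (a b : G) (g : G) : ℤ × ℤ :=
  if h : ∃ p : ℤ × ℤ, g = a ^ p.1 * b ^ p.2 then h.choose else 0

section Coord
variable {a b : G} (hab : a * b = b * a)
  (hfree : ∀ i j : ℤ, a ^ i * b ^ j = 1 → i = 0 ∧ j = 0)

lemma coord_spec (hab : a * b = b * a) (hfree : ∀ i j : ℤ, a ^ i * b ^ j = 1 → i = 0 ∧ j = 0)
    (i j : ℤ) : coord a b (a ^ i * b ^ j) = (i, j) := by
  have h : ∃ p : ℤ × ℤ, a ^ i * b ^ j = a ^ p.1 * b ^ p.2 := ⟨(i, j), rfl⟩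
  rw [coord]
  rw [dif_pos h]
  obtain ⟨h1, h2⟩ := rep_unique hab hfree h.choose_spec
  ext <;> simp [← h1, ← h2]

lemma coord_eq (hab : a * b = b * a) (hfree : ∀ i j : ℤ, a ^ i * b ^ j = 1 → i = 0 ∧ j = 0)
    {g : G} (hg : g ∈ Subgroup.closure {a, b}) :
    g = a ^ (coord a b g).1 * b ^ (coord a b g).2 := by
  obtain ⟨i, j, rfl⟩ := (mem_H_iff hab g).1 hg
  rw [coord_spec hab hfree]

lemma coord_mul (hab : a * b = b * a) (hfree : ∀ i j : ℤ, a ^ i * b ^ j = 1 → i = 0 ∧ j = 0)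
    {g g' : G} (hg : g ∈ Subgroup.closure {a, b}) (hg' : g' ∈ Subgroup.closure {a, b}) :
    coord a b (g * g') = coord a b g + coord a b g' := by
  obtain ⟨i, j, rfl⟩ := (mem_H_iff hab g).1 hg
  obtain ⟨k, l, rfl⟩ := (mem_H_iff hab g').1 hg'
  rw [mul_form hab, coord_spec hab hfree, coord_spec hab hfree, coord_spec hab hfree]
  rfl

lemma coord_one (hab : a * b = b * a) (hfree : ∀ i j : ℤ, a ^ i * b ^ j = 1 → i = 0 ∧ j = 0) :
    coord a b 1 = 0 := by
  have : (1 : G) = a ^ (0:ℤ) * b ^ (0:ℤ) := by simp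
  rw [this, coord_spec hab hfree]; rfl

lemma coord_inv (hab : a * b = b * a) (hfree : ∀ i j : ℤ, a ^ i * b ^ j = 1 → i = 0 ∧ j = 0)
    {g : G} (hg : g ∈ Subgroup.closure {a, b}) :
    coord a b g⁻¹ = -coord a b g := by
  have h1 := coord_mul hab hfree (inv_mem hg) hg
  rw [inv_mul_cancel, coord_one hab hfree] at h1
  have h2 : coord a b g⁻¹ + coord a b g = 0 := h1.symm
  exact eq_neg_of_add_eq_zero_left h2

lemma coord_inj (hab : a * b = b * a) (hfree : ∀ i j : ℤ, a ^ i * b ^ j = 1 → i = 0 ∧ j = 0)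
    {g g' : G} (hg : g ∈ Subgroup.closure {a, b}) (hg' : g' ∈ Subgroup.closure {a, b})
    (h : coord a b g = coord a b g') : g = g' := by
  rw [coord_eq hab hfree hg, coord_eq hab hfree hg', h]

lemma coord_pow (hab : a * b = b * a) (hfree : ∀ i j : ℤ, a ^ i * b ^ j = 1 → i = 0 ∧ j = 0)
    {g : G} (hg : g ∈ Subgroup.closure {a, b}) (n : ℕ) :
    coord a b (g ^ n) = n • coord a b g := by
  induction n with
  | zero => simpa using coord_one hab hfree
  | succ k ih =>
    rw [pow_succ, coord_mul hab hfree (pow_mem hg k) hg, ih, add_smul, one_smul]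

end Coord

section T
variable {a b t : G} (hab : a * b = b * a) (ht : t * t = 1)
  (hat : t * a * t = a⁻¹) (hbt : t * b * t = b⁻¹)

lemma tht (hab : a * b = b * a) (ht : t * t = 1) (hat : t * a * t = a⁻¹) (hbt : t * b * t = b⁻¹)
    {h : G} (hh : h ∈ Subgroup.closure {a, b}) : t * h * t = h⁻¹ := by
  refine Subgroup.closure_induction ?_ (by rw [mul_one, ht, inv_one]) ?_ ?_ hh
  · rintro x (rfl | rfl)
    · exact hat
    · exact hbt
  · rintro x y hx hy ihx ihy
    have e : t * (x * y) * t = (t * x * t) * (t * y * t) := by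
      have : t * (x * y) * t = t * x * (t * t) * y * t := by rw [ht]; group
      rw [this]; group
    rw [e, ihx, ihy, ← mul_inv_rev, H_comm hab hx hy]
  · rintro x hx ihx
    have e : t * x⁻¹ * t = (t * x * t)⁻¹ := by
      have h2 : t⁻¹ = t := inv_eq_of_mul_eq_one_right ht
      rw [mul_inv_rev, mul_inv_rev, h2, mul_assoc]
    rw [e, ihx, inv_inv]

lemma coset (hab : a * b = b * a) (ht : t * t = 1) (hat : t * a * t = a⁻¹) (hbt : t * b * t = b⁻¹)
    (hgenG : Subgroup.closure {a, b, t} = (⊤ : Subgroup G)) (g : G) :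
    g ∈ Subgroup.closure {a, b} ∨ g * t ∈ Subgroup.closure {a, b} := by
  have hg : g ∈ Subgroup.closure {a, b, t} := by rw [hgenG]; trivial
  refine Subgroup.closure_induction ?_ (Or.inl (one_mem _)) ?_ ?_ hg
  · rintro x (rfl | rfl | rfl)
    · exact Or.inl (Subgroup.subset_closure (by simp))
    · exact Or.inl (Subgroup.subset_closure (by simp))
    · exact Or.inr (by rw [ht]; exact one_mem _)
  · rintro x y - - (hx | hx) (hy | hy)
    · exact Or.inl (mul_mem hx hy)
    · exact Or.inr (by rw [mul_assoc]; exact mul_mem hx hy)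
    · refine Or.inr ?_
      have e : x * y * t = (x * t) * (t * y * t) := by
        have : (x * t) * (t * y * t) = x * (t * t) * y * t := by group
        rw [this, ht]; group
      rw [e]
      exact mul_mem hx (by rw [tht hab ht hat hbt hy]; exact inv_mem hy)
    · refine Or.inl ?_
      have e : x * y = (x * t) * (t * (y * t) * t) := by
        have : (x * t) * (t * (y * t) * t) = x * (t * t) * y * (t * t) := by group
        rw [this, ht]; group
      rw [e, tht hab ht hat hbt hy]
      exact mul_mem hx (inv_mem hy)
  · rintro x - (hx | hx)
    · exact Or.inl (inv_mem hx)
    · refine Or.inr ?_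
      have e : x⁻¹ * t = (t * (x * t) * t)⁻¹ := by
        have h2 : t⁻¹ = t := inv_eq_of_mul_eq_one_right ht
        rw [show t * (x * t) * t = t * x * (t * t) by group, ht]
        rw [mul_one, mul_inv_rev, h2]
      rw [e, tht hab ht hat hbt hx, inv_inv]
      exact hx

lemma notH_sq (hab : a * b = b * a) (ht : t * t = 1) (hat : t * a * t = a⁻¹)
    (hbt : t * b * t = b⁻¹) (hgenG : Subgroup.closure {a, b, t} = (⊤ : Subgroup G))
    {g : G} (hg : g ∉ Subgroup.closure {a, b}) : g * g = 1 := by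
  have hgt : g * t ∈ Subgroup.closure {a, b} :=
    (coset hab ht hat hbt hgenG g).resolve_left hg
  have e : g * g = (g * t) * (t * (g * t) * t) := by
    have : (g * t) * (t * (g * t) * t) = g * (t * t) * g * (t * t) := by group
    rw [this, ht]; group
  rw [e, tht hab ht hat hbt hgt, mul_inv_cancel]

lemma notH_conj (hab : a * b = b * a) (ht : t * t = 1) (hat : t * a * t = a⁻¹)
    (hbt : t * b * t = b⁻¹) (hgenG : Subgroup.closure {a, b, t} = (⊤ : Subgroup G))
    {g h : G} (hg : g ∉ Subgroup.closure {a, b}) (hh : h ∈ Subgroup.closure {a, b}) :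
    g * h = h⁻¹ * g := by
  have hgt : g * t ∈ Subgroup.closure {a, b} :=
    (coset hab ht hat hbt hgenG g).resolve_left hg
  have e : g * h = (g * t) * (t * h * t) * t := by
    have : (g * t) * (t * h * t) * t = g * (t * t) * h * (t * t) := by group
    rw [this, ht]; group
  rw [e, tht hab ht hat hbt hh]
  rw [H_comm hab hgt (inv_mem hh)]
  have : h⁻¹ * (g * t) * t = h⁻¹ * g * (t * t) := by group
  rw [this, ht, mul_one]

lemma notH_mul (hab : a * b = b * a) (ht : t * t = 1) (hat : t * a * t = a⁻¹)
    (hbt : t * b * t = b⁻¹) (hgenG : Subgroup.closure {a, b, t} = (⊤ : Subgroup G))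
    {g g' : G} (hg : g ∉ Subgroup.closure {a, b}) (hg' : g' ∉ Subgroup.closure {a, b}) :
    g * g' ∈ Subgroup.closure {a, b} := by
  have hgt : g * t ∈ Subgroup.closure {a, b} :=
    (coset hab ht hat hbt hgenG g).resolve_left hg
  have hgt' : g' * t ∈ Subgroup.closure {a, b} :=
    (coset hab ht hat hbt hgenG g').resolve_left hg'
  have e : g * g' = (g * t) * (t * (g' * t) * t) := by
    have : (g * t) * (t * (g' * t) * t) = g * (t * t) * g' * (t * t) := by group
    rw [this, ht]; group
  rw [e, tht hab ht hat hbt hgt']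
  exact mul_mem hgt (inv_mem hgt')

lemma notH_inv_eq (hab : a * b = b * a) (ht : t * t = 1) (hat : t * a * t = a⁻¹)
    (hbt : t * b * t = b⁻¹) (hgenG : Subgroup.closure {a, b, t} = (⊤ : Subgroup G))
    {g : G} (hg : g ∉ Subgroup.closure {a, b}) : g⁻¹ = g :=
  inv_eq_of_mul_eq_one_right (notH_sq hab ht hat hbt hgenG hg)

end T

noncomputable def chi (α β : ℝ) (a b : G) (g : G) : ℝ :=
  α * (coord a b g).1 + β * (coord a b g).2

section Chi
variable {a b : G} (α β : ℝ)

lemma chi_mul (hab : a * b = b * a) (hfree : ∀ i j : ℤ, a ^ i * b ^ j = 1 → i = 0 ∧ j = 0)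
    {g g' : G} (hg : g ∈ Subgroup.closure {a, b}) (hg' : g' ∈ Subgroup.closure {a, b}) :
    chi α β a b (g * g') = chi α β a b g + chi α β a b g' := by
  unfold chi
  rw [coord_mul hab hfree hg hg', Prod.fst_add, Prod.snd_add]
  push_cast
  ring

lemma chi_one (hab : a * b = b * a) (hfree : ∀ i j : ℤ, a ^ i * b ^ j = 1 → i = 0 ∧ j = 0) :
    chi α β a b 1 = 0 := by
  unfold chi
  rw [coord_one hab hfree]
  simp

lemma chi_pow (hab : a * b = b * a) (hfree : ∀ i j : ℤ, a ^ i * b ^ j = 1 → i = 0 ∧ j = 0)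
    {g : G} (hg : g ∈ Subgroup.closure {a, b}) (n : ℕ) :
    chi α β a b (g ^ n) = n * chi α β a b g := by
  induction n with
  | zero => simpa using chi_one α β hab hfree
  | succ k ih =>
    rw [pow_succ, chi_mul α β hab hfree (pow_mem hg k) hg, ih]
    push_cast
    ring

end Chi

-- split a list at the first letter not satisfying P
lemma split_first {P : G → Prop} :
    ∀ w : List G, (¬ ∀ x ∈ w, P x) →
      ∃ zs y ws, w = zs ++ y :: ws ∧ (∀ z ∈ zs, P z) ∧ ¬ P y := by
  intro w
  induction w with
  | nil => intro h; exact absurd (by simp) h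
  | cons x w ih =>
    intro h
    by_cases hx : P x
    · have h2 : ¬ ∀ x ∈ w, P x := by
        intro hall; exact h (by simpa [hx] using hall)
      obtain ⟨zs, y, ws, rfl, hzs, hy⟩ := ih h2
      exact ⟨x :: zs, y, ws, rfl, by simpa [hx] using hzs, hy⟩
    · exact ⟨[], x, w, rfl, by simp, hx⟩

section WordBound
variable {a b t : G} {α β : ℝ} {X : Finset G}

lemma Zprod_bound (hab : a * b = b * a) (hfree : ∀ i j : ℤ, a ^ i * b ^ j = 1 → i = 0 ∧ j = 0)
    (hz : ∀ z ∈ X, z ∈ Subgroup.closure {a, b} → chi α β a b (z * z) ≤ 1) :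
    ∀ w : List G, (∀ x ∈ w, x ∈ X ∧ x ∈ Subgroup.closure {a, b}) →
      2 * chi α β a b w.prod ≤ w.length := by
  intro w
  induction w with
  | nil => intro _; simp [chi_one α β hab hfree]
  | cons x w ih =>
    intro hw
    obtain ⟨hxX, hxH⟩ := hw x (by simp)
    have hwH : ∀ x ∈ w, x ∈ X ∧ x ∈ Subgroup.closure {a, b} := fun y hy => hw y (by simp [hy])
    have hprodH : w.prod ∈ Subgroup.closure {a, b} :=
      list_prod_mem fun y hy => (hwH y hy).2
    rw [List.prod_cons, chi_mul α β hab hfree hxH hprodH]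
    have h1 : 2 * chi α β a b x ≤ 1 := by
      have := hz x hxX hxH
      rw [chi_mul α β hab hfree hxH hxH] at this
      linarith
    have h2 := ih hwH
    simp only [List.length_cons]
    push_cast
    linarith

lemma word_bound (hab : a * b = b * a) (ht : t * t = 1)
    (hat : t * a * t = a⁻¹) (hbt : t * b * t = b⁻¹)
    (hfree : ∀ i j : ℤ, a ^ i * b ^ j = 1 → i = 0 ∧ j = 0)
    (hgenG : Subgroup.closure {a, b, t} = (⊤ : Subgroup G))
    (hsym : ∀ g ∈ X, g⁻¹ ∈ X)
    (hz : ∀ z ∈ X, z ∈ Subgroup.closure {a, b} → chi α β a b (z * z) ≤ 1)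
    (hy : ∀ y ∈ X, y ∉ Subgroup.closure {a, b} → ∀ y' ∈ X, y' ∉ Subgroup.closure {a, b} →
      chi α β a b (y * y') ≤ 1) :
    ∀ n (w : List G), w.length ≤ n → (∀ x ∈ w, x ∈ X) →
      w.prod ∈ Subgroup.closure {a, b} → 2 * chi α β a b w.prod ≤ w.length := by
  intro n
  induction n with
  | zero =>
    intro w hlen _ _
    have : w = [] := List.length_eq_zero_iff.1 (by omega)
    subst this
    simp [chi_one α β hab hfree]
  | succ m ih =>
    intro w hlen hwX hwH
    cases w with
    | nil => simp [chi_one α β hab hfree]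
    | cons x w =>
      rw [List.prod_cons] at hwH ⊢
      by_cases hxH : x ∈ Subgroup.closure {a, b}
      · have hwH' : w.prod ∈ Subgroup.closure {a, b} := by
          have := mul_mem (inv_mem hxH) hwH
          rwa [← mul_assoc, inv_mul_cancel, one_mul] at this
        rw [chi_mul α β hab hfree hxH hwH']
        have h1 : 2 * chi α β a b x ≤ 1 := by
          have := hz x (hwX x (by simp)) hxH
          rw [chi_mul α β hab hfree hxH hxH] at this
          linarith
        have h2 := ih w (by simp only [List.length_cons] at hlen; omega)
          (fun y hy => hwX y (by simp [hy])) hwH'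
        simp only [List.length_cons]
        push_cast
        linarith
      · -- x ∉ H: find the next non-H letter
        have hnotall : ¬ ∀ z ∈ w, z ∈ Subgroup.closure {a, b} := by
          intro hall
          have : w.prod ∈ Subgroup.closure {a, b} := list_prod_mem hall
          exact hxH (by
            have := mul_mem hwH (inv_mem this)
            rwa [mul_assoc, mul_inv_cancel, mul_one] at this)
        obtain ⟨zs, y, ws, rfl, hzs, hyH⟩ := split_first w hnotall
        have hzsX : ∀ z ∈ zs, z ∈ X := fun z hz => hwX z (by simp [hz])
        have hyX : y ∈ X := hwX y (by simp)
        have hwsX : ∀ z ∈ ws, z ∈ X := fun z hz => hwX z (by simp [hz])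
        have hzsH : zs.prod ∈ Subgroup.closure {a, b} := list_prod_mem hzs
        have hxyH : x * y ∈ Subgroup.closure {a, b} := notH_mul hab ht hat hbt hgenG hxH hyH
        -- algebra: x * (zs.prod * (y * ws.prod)) = zs.prod⁻¹ * ((x*y) * ws.prod)
        have halg : x * (zs ++ y :: ws).prod = zs.prod⁻¹ * ((x * y) * ws.prod) := by
          rw [List.prod_append, List.prod_cons]
          have e1 : x * zs.prod = zs.prod⁻¹ * x := notH_conj hab ht hat hbt hgenG hxH hzsH
          calc x * (zs.prod * (y * ws.prod)) = (x * zs.prod) * y * ws.prod := by group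
            _ = (zs.prod⁻¹ * x) * y * ws.prod := by rw [e1]
            _ = zs.prod⁻¹ * ((x * y) * ws.prod) := by group
        have hwsH : ws.prod ∈ Subgroup.closure {a, b} := by
          have h0 : zs.prod⁻¹ * ((x * y) * ws.prod) ∈ Subgroup.closure {a, b} := by
            rw [← halg]; exact hwH
          have h1 := mul_mem hzsH h0
          rw [← mul_assoc, mul_inv_cancel, one_mul] at h1
          have h2 := mul_mem (inv_mem hxyH) h1
          rwa [← mul_assoc, inv_mul_cancel, one_mul] at h2
        rw [halg, chi_mul α β hab hfree (inv_mem hzsH) (mul_mem hxyH hwsH),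
          chi_mul α β hab hfree hxyH hwsH]
        -- bound the three pieces
        have hb1 : 2 * chi α β a b zs.prod⁻¹ ≤ zs.length := by
          have := Zprod_bound hab hfree hz ((zs.reverse.map (·⁻¹)))
            (by
              intro z hz2
              simp only [List.mem_map, List.mem_reverse] at hz2
              obtain ⟨z', hz', rfl⟩ := hz2
              exact ⟨hsym z' (hzsX z' hz'), inv_mem (hzs z' hz')⟩)
          have e : (zs.reverse.map (·⁻¹)).prod = zs.prod⁻¹ := by
            rw [List.map_reverse, ← List.prod_inv_reverse]
          rw [e] at this
          simpa using this
        have hb2 : chi α β a b (x * y) ≤ 1 := hy x (hwX x (by simp)) hxH y hyX hyH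
        have hb3 : 2 * chi α β a b ws.prod ≤ ws.length := by
          apply ih ws ?_ hwsX hwsH
          have : (x :: (zs ++ y :: ws)).length = zs.length + ws.length + 2 := by
            simp; omega
          omega
        have hlen2 : ((x :: (zs ++ y :: ws)).length : ℝ) = zs.length + ws.length + 2 := by
          push_cast [List.length_cons, List.length_append, List.length_cons]
          ring
        rw [hlen2]
        linarith

end WordBound
end G2aux

open G2aux in
/-- G₂ = ℤ² ⋊ C₂ (with C₂ acting by inversion), characterized abstractly: a, b generate a
free abelian group of rank 2, t has order 2 and inverts a and b, t ∉ ⟨a,b⟩, and a, b, t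
generate G. With respect to every finite symmetric generating set X, some element has at
least C(2n,n) geodesic representatives of length 4n, and the geodesic growth is
exponential. -/
theorem G2_exponential_geodesic_growth_every_generating_set {G : Type*} [Group G]
    (a b t : G) (hab : a * b = b * a) (ht : t * t = 1)
    (hat : t * a * t = a⁻¹) (hbt : t * b * t = b⁻¹)
    (hfree : ∀ i j : ℤ, a ^ i * b ^ j = 1 → i = 0 ∧ j = 0)
    (htH : t ∉ Subgroup.closure {a, b})
    (hgenG : Subgroup.closure {a, b, t} = (⊤ : Subgroup G))
    (X : Finset G) (hsym : ∀ g ∈ X, g⁻¹ ∈ X)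
    (hgen : Subgroup.closure (X : Set G) = ⊤) :
    (∀ n : ℕ, ∃ g : G, Nat.choose (2 * n) n ≤
      Set.ncard {w : List G | IsGeodesicWord (X : Set G) w ∧
        w.length = 4 * n ∧ w.prod = g}) ∧
    ∃ c : ℝ, 1 < c ∧ ∀ n : ℕ, c ^ n ≤ (geodesicGrowth (X : Set G) n : ℝ) := by
  classical
  -- every element is a product of letters from X
  have hword : ∀ g : G, ∃ w : List G, (∀ x ∈ w, x ∈ X) ∧ w.prod = g := by
    intro g
    have hg : g ∈ Subgroup.closure (X : Set G) := by rw [hgen]; trivial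
    have hg' : g ∈ Submonoid.closure ((X : Set G) ∪ (X : Set G)⁻¹) := by
      rw [← Subgroup.closure_toSubmonoid]; exact hg
    obtain ⟨l, hl, hlp⟩ := Submonoid.exists_list_of_mem_closure hg'
    refine ⟨l, fun x hx => ?_, hlp⟩
    rcases hl x hx with h | h
    · exact h
    · have : x⁻¹ ∈ X := h
      simpa using hsym _ this
  -- some letter lies outside H
  obtain ⟨y₀, hy₀X, hy₀H⟩ : ∃ y ∈ X, y ∉ Subgroup.closure {a, b} := by
    by_contra h
    push_neg at h
    have : Subgroup.closure (X : Set G) ≤ Subgroup.closure {a, b} :=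
      (Subgroup.closure_le _).2 h
    rw [hgen] at this
    exact htH (this trivial)
  have hy₀1 : y₀ ≠ 1 := fun h => hy₀H (h ▸ one_mem _)
  -- the finite set of coordinate vectors
  set T : Finset (ℤ × ℤ) :=
    ((X.filter (· ∈ Subgroup.closure {a, b})).image fun z => coord a b (z * z)) ∪
    (((X.filter (· ∉ Subgroup.closure {a, b})) ×ˢ
        (X.filter (· ∉ Subgroup.closure {a, b}))).image
      fun p => coord a b (p.1 * p.2)) with hT
  -- every element of T has a two-letter block
  have getBlock : ∀ u ∈ T, ∃ B : List G, B.length = 2 ∧ (∀ x ∈ B, x ∈ X) ∧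
      B.prod ∈ Subgroup.closure {a, b} ∧ coord a b B.prod = u := by
    intro u hu
    rw [hT, Finset.mem_union] at hu
    rcases hu with hu | hu
    · obtain ⟨z, hz, rfl⟩ := Finset.mem_image.1 hu
      obtain ⟨hzX, hzH⟩ := Finset.mem_filter.1 hz
      exact ⟨[z, z], rfl, by simp [hzX], by simp [mul_mem hzH hzH], by simp⟩
    · obtain ⟨p, hp, rfl⟩ := Finset.mem_image.1 hu
      obtain ⟨hp1, hp2⟩ := Finset.mem_product.1 hp
      obtain ⟨h1X, h1H⟩ := Finset.mem_filter.1 hp1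
      obtain ⟨h2X, h2H⟩ := Finset.mem_filter.1 hp2
      exact ⟨[p.1, p.2], rfl, by simp [h1X, h2X],
        by simp [notH_mul hab ht hat hbt hgenG h1H h2H], by simp⟩
  -- membership of blocks in T
  have memT_z : ∀ z ∈ X, z ∈ Subgroup.closure {a, b} → coord a b (z * z) ∈ T := by
    intro z hzX hzH
    rw [hT, Finset.mem_union]
    exact Or.inl (Finset.mem_image.2 ⟨z, Finset.mem_filter.2 ⟨hzX, hzH⟩, rfl⟩)
  have memT_y : ∀ y ∈ X, y ∉ Subgroup.closure {a, b} → ∀ y' ∈ X,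
      y' ∉ Subgroup.closure {a, b} → coord a b (y * y') ∈ T := by
    intro y hyX hyH y' hy'X hy'H
    rw [hT, Finset.mem_union]
    exact Or.inr (Finset.mem_image.2 ⟨(y, y'),
      Finset.mem_product.2 ⟨Finset.mem_filter.2 ⟨hyX, hyH⟩, Finset.mem_filter.2 ⟨hy'X, hy'H⟩⟩,
      rfl⟩)
  -- T is symmetric
  have hTsym : ∀ v ∈ T, -v ∈ T := by
    intro v hv
    rw [hT, Finset.mem_union] at hv
    rcases hv with hv | hv
    · obtain ⟨z, hz, rfl⟩ := Finset.mem_image.1 hv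
      obtain ⟨hzX, hzH⟩ := Finset.mem_filter.1 hz
      have h1 : coord a b ((z * z)⁻¹) = -coord a b (z * z) :=
        coord_inv hab hfree (mul_mem hzH hzH)
      have h2 : (z * z)⁻¹ = z⁻¹ * z⁻¹ := by rw [mul_inv_rev]
      rw [← h1, h2]
      exact memT_z z⁻¹ (hsym z hzX) (inv_mem hzH)
    · obtain ⟨p, hp, rfl⟩ := Finset.mem_image.1 hv
      obtain ⟨hp1, hp2⟩ := Finset.mem_product.1 hp
      obtain ⟨h1X, h1H⟩ := Finset.mem_filter.1 hp1
      obtain ⟨h2X, h2H⟩ := Finset.mem_filter.1 hp2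
      have h1 : coord a b ((p.1 * p.2)⁻¹) = -coord a b (p.1 * p.2) :=
        coord_inv hab hfree (notH_mul hab ht hat hbt hgenG h1H h2H)
      have h2 : (p.1 * p.2)⁻¹ = p.2 * p.1 := by
        rw [mul_inv_rev, notH_inv_eq hab ht hat hbt hgenG h1H,
          notH_inv_eq hab ht hat hbt hgenG h2H]
      rw [← h1, h2]
      exact memT_y p.2 h2X h2H p.1 h1X h1H
  -- bridge between functionals bounded on T and the word bound hypotheses
  have bridge : ∀ α β : ℝ, (∀ v ∈ T, α * v.1 + β * v.2 ≤ 1) →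
      (∀ z ∈ X, z ∈ Subgroup.closure {a, b} → chi α β a b (z * z) ≤ 1) ∧
      (∀ y ∈ X, y ∉ Subgroup.closure {a, b} → ∀ y' ∈ X, y' ∉ Subgroup.closure {a, b} →
        chi α β a b (y * y') ≤ 1) := by
    intro α β hf
    constructor
    · intro z hzX hzH
      exact hf _ (memT_z z hzX hzH)
    · intro y hyX hyH y' hy'X hy'H
      exact hf _ (memT_y y hyX hyH y' hy'X hy'H)
  -- words representing a and b
  obtain ⟨wa, hwaX, hwaP⟩ := hword a
  obtain ⟨wb, hwbX, hwbP⟩ := hword b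
  have haH : a ∈ Subgroup.closure ({a, b} : Set G) := Subgroup.subset_closure (by simp)
  have hbH : b ∈ Subgroup.closure ({a, b} : Set G) := Subgroup.subset_closure (by simp)
  have hcoord_a : coord a b a = (1, 0) := by
    simpa using coord_spec hab hfree 1 0
  have hcoord_b : coord a b b = (0, 1) := by
    simpa using coord_spec hab hfree 0 1
  -- bound applied to a and b, for any admissible functional
  have boundab : ∀ α β : ℝ, (∀ v ∈ T, α * v.1 + β * v.2 ≤ 1) →
      2 * α ≤ (wa.length : ℝ) ∧ 2 * β ≤ (wb.length : ℝ) := by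
    intro α β hf
    obtain ⟨hz, hy⟩ := bridge α β hf
    constructor
    · have := word_bound hab ht hat hbt hfree hgenG hsym hz hy wa.length wa le_rfl hwaX
        (hwaP ▸ haH)
      rw [hwaP] at this
      simpa [chi, hcoord_a] using this
    · have := word_bound hab ht hat hbt hfree hgenG hsym hz hy wb.length wb le_rfl hwbX
        (hwbP ▸ hbH)
      rw [hwbP] at this
      simpa [chi, hcoord_b] using this
  -- helper : a linear bound for all λ forces a zero coefficient
  have lam_zero : ∀ c M : ℝ, (∀ lam : ℝ, lam * c ≤ M) → c = 0 := by
    intro c M h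
    by_contra hc
    rcases lt_or_gt_of_ne hc with h1 | h1
    · have h2 := h ((M + 1) / c)
      rw [div_mul_cancel₀ _ (ne_of_lt h1)] at h2
      linarith
    · have h2 := h ((M + 1) / c)
      rw [div_mul_cancel₀ _ (ne_of_gt h1)] at h2
      linarith
  -- T spans the plane
  have hspan : ∃ u ∈ T, ∃ v ∈ T, u.1 * v.2 - u.2 * v.1 ≠ 0 := by
    by_contra hdep
    push_neg at hdep
    by_cases hT0 : ∀ v ∈ T, v = (0 : ℤ × ℤ)
    · -- all vectors vanish: any functional is admissible
      have hf : ∀ lam : ℝ, ∀ v ∈ T, lam * v.1 + (0:ℝ) * v.2 ≤ 1 := by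
        intro lam v hv
        rw [hT0 v hv]
        norm_num
      have h1 : ∀ lam : ℝ, lam * 2 ≤ (wa.length : ℝ) := by
        intro lam
        have := (boundab lam 0 (hf lam)).1
        linarith
      have := lam_zero 2 _ h1
      norm_num at this
    · push_neg at hT0
      obtain ⟨w₀, hw₀T, hw₀⟩ := hT0
      -- perpendicular functionals kill all of T
      have hperp : ∀ lam : ℝ, ∀ v ∈ T,
          (lam * (-(w₀.2 : ℝ))) * v.1 + (lam * (w₀.1 : ℝ)) * v.2 ≤ 1 := by
        intro lam v hv
        have h0 : w₀.1 * v.2 - w₀.2 * v.1 = 0 := hdep w₀ hw₀T v hv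
        have h0R : (w₀.1 : ℝ) * v.2 - (w₀.2 : ℝ) * v.1 = 0 := by exact_mod_cast h0
        have : (lam * (-(w₀.2 : ℝ))) * v.1 + (lam * (w₀.1 : ℝ)) * v.2
            = lam * ((w₀.1 : ℝ) * v.2 - (w₀.2 : ℝ) * v.1) := by ring
        rw [this, h0R, mul_zero]
        norm_num
      have h1 : ∀ lam : ℝ, lam * (2 * (-(w₀.2 : ℝ))) ≤ (wa.length : ℝ) := by
        intro lam
        have := (boundab _ _ (hperp lam)).1
        linarith
      have h2 : ∀ lam : ℝ, lam * (2 * (w₀.1 : ℝ)) ≤ (wb.length : ℝ) := by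
        intro lam
        have := (boundab _ _ (hperp lam)).2
        linarith
      have e1 := lam_zero _ _ h1
      have e2 := lam_zero _ _ h2
      apply hw₀
      have f1 : (w₀.1 : ℝ) = 0 := by linarith
      have f2 : (w₀.2 : ℝ) = 0 := by linarith
      have g1 : w₀.1 = 0 := by exact_mod_cast f1
      have g2 : w₀.2 = 0 := by exact_mod_cast f2
      exact Prod.ext_iff.2 ⟨g1, g2⟩
  -- get the supporting edge
  obtain ⟨α, β, u, v, huT, hvT, huv, hfu, hfv, hfle⟩ := plane_functional T hTsym hspan
  obtain ⟨B₁, hB₁len, hB₁X, hB₁H, hB₁c⟩ := getBlock u huT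
  obtain ⟨B₂, hB₂len, hB₂X, hB₂H, hB₂c⟩ := getBlock v hvT
  set s₁ : G := B₁.prod with hs₁
  set s₂ : G := B₂.prod with hs₂
  have hs12 : s₁ ≠ s₂ := by
    intro h
    apply huv
    rw [← hB₁c, ← hB₂c, h]
  have hB12 : B₁ ≠ B₂ := fun h => hs12 (by rw [hs₁, hs₂, h])
  have hcomm12 : Commute s₁ s₂ := H_comm hab hB₁H hB₂H
  obtain ⟨hzchi, hychi⟩ := bridge α β hfle
  -- chi of the target elements
  have hchi_s₁ : chi α β a b s₁ = 1 := by
    rw [chi, hB₁c]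
    exact hfu
  have hchi_s₂ : chi α β a b s₂ = 1 := by
    rw [chi, hB₂c]
    exact hfv
  -- part 1
  have part1 : ∀ n : ℕ, ∃ g : G, Nat.choose (2 * n) n ≤
      Set.ncard {w : List G | IsGeodesicWord (X : Set G) w ∧
        w.length = 4 * n ∧ w.prod = g} := by
    intro n
    refine ⟨s₁ ^ n * s₂ ^ n, ?_⟩
    have hgH : s₁ ^ n * s₂ ^ n ∈ Subgroup.closure ({a, b} : Set G) :=
      mul_mem (pow_mem hB₁H n) (pow_mem hB₂H n)
    have hchig : chi α β a b (s₁ ^ n * s₂ ^ n) = 2 * n := by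
      rw [chi_mul α β hab hfree (pow_mem hB₁H n) (pow_mem hB₂H n),
        chi_pow α β hab hfree hB₁H, chi_pow α β hab hfree hB₂H, hchi_s₁, hchi_s₂]
      ring
    -- every representing word has length at least 4n
    have hlower : ∀ w' : List G, (∀ x ∈ w', x ∈ (X : Set G)) →
        w'.prod = s₁ ^ n * s₂ ^ n → 4 * n ≤ w'.length := by
      intro w' hw'X hw'P
      have := word_bound hab ht hat hbt hfree hgenG hsym hzchi hychi w'.length w' le_rfl
        (fun x hx => hw'X x hx) (hw'P ▸ hgH)
      rw [hw'P, hchig] at this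
      have h4 : (4 * n : ℝ) ≤ (w'.length : ℝ) := by push_cast at this ⊢; linarith
      exact_mod_cast h4
    -- the blockwords are geodesic representatives
    have hmember : ∀ l : List Bool, l.length = 2 * n → l.count true = n →
        blockWord B₁ B₂ l ∈ {w : List G | IsGeodesicWord (X : Set G) w ∧
          w.length = 4 * n ∧ w.prod = s₁ ^ n * s₂ ^ n} := by
      intro l hl hlc
      have hlf : l.count false = n := by
        have := List.count_true_add_count_false l
        omega
      have hXl : ∀ x ∈ blockWord B₁ B₂ l, x ∈ (X : Set G) := by
        intro x hx
        rcases blockWord_mem B₁ B₂ l x hx with h | h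
        · exact hB₁X x h
        · exact hB₂X x h
      have hprod : (blockWord B₁ B₂ l).prod = s₁ ^ n * s₂ ^ n := by
        rw [blockWord_prod B₁ B₂ s₁ s₂ rfl rfl hcomm12 l, hlc, hlf]
      have hlen : (blockWord B₁ B₂ l).length = 4 * n := by
        have := blockWord_length B₁ B₂ hB₁len hB₂len l
        omega
      refine ⟨⟨hXl, ?_⟩, hlen, hprod⟩
      intro w' hw' hw'p
      rw [hlen]
      exact hlower w' hw' (by rw [hw'p, hprod])
    -- inject the subsets of Fin (2n)
    set F : Finset (Fin (2 * n)) → List G :=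
      fun A => blockWord B₁ B₂ (List.ofFn (fun i => decide (i ∈ A))) with hF
    have hFinj : Function.Injective F :=
      fun A B h => ofFn_mem_injective (blockWord_injective B₁ B₂ hB₁len hB₂len hB12 h)
    have hFmem : ∀ A ∈ Finset.powersetCard n (Finset.univ : Finset (Fin (2 * n))),
        F A ∈ {w : List G | IsGeodesicWord (X : Set G) w ∧
          w.length = 4 * n ∧ w.prod = s₁ ^ n * s₂ ^ n} := by
      intro A hA
      apply hmember
      · simp
      · rw [count_true_ofFn_mem]
        exact (Finset.mem_powersetCard.1 hA).2
    -- cardinality computation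
    have hfin : {w : List G | IsGeodesicWord (X : Set G) w ∧
        w.length = 4 * n ∧ w.prod = s₁ ^ n * s₂ ^ n}.Finite := by
      apply Set.Finite.subset (finite_words X (4 * n))
      rintro w ⟨⟨hwX, -⟩, hwlen, -⟩
      exact ⟨fun x hx => hwX x hx, le_of_eq hwlen⟩
    calc (Nat.choose (2 * n) n : ℕ)
        = (Finset.powersetCard n (Finset.univ : Finset (Fin (2 * n)))).card := by
          rw [Finset.card_powersetCard, Finset.card_univ, Fintype.card_fin]
      _ = Set.ncard (F '' (Finset.powersetCard n (Finset.univ : Finset (Fin (2 * n))) : Set _)) := by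
          rw [Set.ncard_image_of_injective _ hFinj, Set.ncard_coe_finset]
      _ ≤ _ := by
          apply Set.ncard_le_ncard _ hfin
          rintro w ⟨A, hA, rfl⟩
          exact hFmem A (by exact_mod_cast hA)
  refine ⟨part1, ?_⟩
  -- part 2 : exponential geodesic growth
  refine ⟨(2 : ℝ) ^ ((1 : ℝ) / 8), ?_, ?_⟩
  · rw [show (1:ℝ) = (2:ℝ) ^ (0:ℝ) by simp]
    exact Real.rpow_lt_rpow_left_iff (by norm_num) |>.2 (by norm_num)
  intro n
  have hcpow : ((2 : ℝ) ^ ((1 : ℝ) / 8)) ^ n = (2 : ℝ) ^ ((n : ℝ) / 8) := by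
    rw [← Real.rpow_natCast ((2 : ℝ) ^ ((1 : ℝ) / 8)) n, ← Real.rpow_mul (by norm_num)]
    ring_nf
  rw [hcpow]
  -- growth set is finite
  have hfinB : {w : List G | IsGeodesicWord (X : Set G) w ∧ w.length ≤ n}.Finite := by
    apply Set.Finite.subset (finite_words X n)
    rintro w ⟨⟨hwX, -⟩, hwlen⟩
    exact ⟨fun x hx => hwX x hx, hwlen⟩
  by_cases hn : n = 0
  · subst hn
    simp only [Nat.cast_zero, zero_div, Real.rpow_zero]
    have hne : ([] : List G) ∈ {w : List G | IsGeodesicWord (X : Set G) w ∧ w.length ≤ 0} :=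
      ⟨⟨by simp, fun w' _ _ => by simp⟩, by simp⟩
    have : 0 < Set.ncard {w : List G | IsGeodesicWord (X : Set G) w ∧ w.length ≤ 0} :=
      (Set.ncard_pos hfinB).2 ⟨_, hne⟩
    rw [geodesicGrowth]
    exact_mod_cast this
  by_cases hsmall : n ≤ 5
  · -- small n : at least the empty word and [y₀]
    have h2 : 2 ≤ geodesicGrowth (X : Set G) n := by
      have hsub : {[], [y₀]} ⊆ {w : List G | IsGeodesicWord (X : Set G) w ∧ w.length ≤ n} := by
        rintro w (rfl | rfl)
        · exact ⟨⟨by simp, fun w' _ _ => by simp⟩, by simp⟩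
        · refine ⟨⟨by simpa using hy₀X, ?_⟩, by simp; omega⟩
          intro w' hw' hw'p
          rcases w' with _ | ⟨x, w'⟩
          · exfalso
            apply hy₀1
            simpa using hw'p.symm
          · simp
      have := Set.ncard_le_ncard hsub hfinB
      have hpair : Set.ncard {([] : List G), [y₀]} = 2 :=
        Set.ncard_pair (by simp)
      rw [geodesicGrowth]
      omega
    calc (2:ℝ) ^ ((n : ℝ)/8) ≤ (2:ℝ) ^ (1:ℝ) := by
          apply Real.rpow_le_rpow_of_exponent_le (by norm_num)
          have : (n : ℝ) ≤ 5 := by exact_mod_cast hsmall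
          linarith
      _ = 2 := by norm_num
      _ ≤ _ := by exact_mod_cast h2
  · -- main case
    push_neg at hsmall
    set m := n / 4 with hm
    obtain ⟨g, hg⟩ := part1 m
    have hsub : {w : List G | IsGeodesicWord (X : Set G) w ∧ w.length = 4 * m ∧ w.prod = g}
        ⊆ {w : List G | IsGeodesicWord (X : Set G) w ∧ w.length ≤ n} := by
      rintro w ⟨hw1, hw2, -⟩
      exact ⟨hw1, by omega⟩
    have hstep : Nat.choose (2 * m) m ≤ geodesicGrowth (X : Set G) n := by
      rw [geodesicGrowth]
      exact le_trans hg (Set.ncard_le_ncard hsub hfinB)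
    have hbinom : 2 ^ m ≤ Nat.choose (2 * m) m := two_pow_le_centralBinom m
    have h8m : n ≤ 8 * m := by omega
    calc (2:ℝ) ^ ((n : ℝ)/8) ≤ (2:ℝ) ^ (m : ℝ) := by
          apply Real.rpow_le_rpow_of_exponent_le (by norm_num)
          have : (n : ℝ) ≤ 8 * m := by exact_mod_cast h8m
          linarith
      _ = ((2 ^ m : ℕ) : ℝ) := by
          rw [Real.rpow_natCast]
          push_cast
          ring
      _ ≤ ((Nat.choose (2 * m) m : ℕ) : ℝ) := by exact_mod_cast hbinom
      _ ≤ _ := by exact_mod_cast hstep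
end

section
/- Let G be a group with finite symmetric generating set X = {x₀, x₀⁻¹} ∪ Y. If there is a constant k such that every geodesic word over X contains at most k letters from Y, then the geodesic growth of G with respect to X is polynomial: Γ_{G,X}(n) ≤ C·n^{k+1} for some constant C depending only on k and |Y|. -/
/-!
Cancelling `x₀ x₀⁻¹` or `x₀⁻¹ x₀` shortens a word, so every maximal `Y`-free segment of a
geodesic is a power `x₀ ^ (±m)`. A geodesic of length at most `n` is therefore a concatenation
of at most `k + 1` such powers separated by letters of `Y`; each power can be chosen in at most
`2 (n + 1)` ways, so there are at most `(2 (n + 1)) ^ (k + 1) (|Y| + 1) ^ k` geodesics.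
-/

section Words

variable {α : Type*} [DecidableEq α]

def powerWords (Z : Finset α) (n : ℕ) : Finset (List α) :=
  (Z ×ˢ Finset.range (n + 1)).image fun p => List.replicate p.2 p.1

def blockWords (Z Y : Finset α) (n : ℕ) : ℕ → Finset (List α)
  | 0 => powerWords Z n
  | k + 1 => powerWords Z n ∪
      (powerWords Z n ×ˢ Y ×ˢ blockWords Z Y n k).image fun p => p.1 ++ p.2.1 :: p.2.2

lemma card_powerWords_le (Z : Finset α) (n : ℕ) : (powerWords Z n).card ≤ Z.card * (n + 1) :=
  Finset.card_image_le.trans (by simp)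

lemma card_blockWords_le (Z Y : Finset α) (n k : ℕ) :
    (blockWords Z Y n k).card ≤ (Z.card * (n + 1)) ^ (k + 1) * (Y.card + 1) ^ k := by
  set m := Z.card * (n + 1)
  induction k with
  | zero => simpa [blockWords] using card_powerWords_le Z n
  | succ k ih =>
    have hm : m ≤ m ^ (k + 2) * (Y.card + 1) ^ k :=
      (Nat.le_self_pow (by omega) m).trans (Nat.le_mul_of_pos_right _ (by positivity))
    calc (blockWords Z Y n (k + 1)).card
        ≤ m + m * (Y.card * (m ^ (k + 1) * (Y.card + 1) ^ k)) := by
          refine (Finset.card_union_le _ _).trans (add_le_add (card_powerWords_le Z n) ?_)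
          refine Finset.card_image_le.trans ?_
          simp only [Finset.card_product]
          gcongr
          exact card_powerWords_le Z n
      _ ≤ m ^ (k + 2) * (Y.card + 1) ^ k + m ^ (k + 2) * (Y.card + 1) ^ k * Y.card :=
          add_le_add hm (le_of_eq (by ring))
      _ = m ^ (k + 2) * (Y.card + 1) ^ (k + 1) := by ring

lemma mem_powerWords {Z : Finset α} (hZ : Z.Nonempty) {n : ℕ} {w : List α}
    (hwZ : ∀ c ∈ w, c ∈ Z) (hw : w.IsChain (· = ·)) (hn : w.length ≤ n) :
    w ∈ powerWords Z n := by
  rcases w with _ | ⟨c, w⟩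
  · obtain ⟨c, hc⟩ := hZ
    exact Finset.mem_image.2 ⟨(c, 0), by simp [hc], rfl⟩
  · refine Finset.mem_image.2 ⟨(c, w.length + 1), ?_, ?_⟩
    · simp only [List.length_cons] at hn
      simp [hwZ c (by simp), Nat.lt_succ_of_le hn]
    · rw [List.isChain_cons_eq_iff_eq_replicate.1 hw]
      simp [List.replicate_succ]

variable {Z Y : Finset α} {n : ℕ}

lemma mem_powerWords_of_countP_eq_zero (hZ : Z.Nonempty) {w : List α}
    (hwZ : ∀ c ∈ w, c ∉ Y → c ∈ Z) (hw : w.IsChain (fun c d => c ∉ Y → d ∉ Y → c = d))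
    (hY : w.countP (· ∈ Y) = 0) (hn : w.length ≤ n) : w ∈ powerWords Z n := by
  have hwY : ∀ c ∈ w, c ∉ Y := by simpa using List.countP_eq_zero.1 hY
  refine mem_powerWords hZ (fun c hc => hwZ c hc (hwY c hc)) ?_ hn
  exact hw.imp_of_mem_imp fun c d hc hd h => h (hwY c hc) (hwY d hd)

lemma mem_blockWords (hZ : Z.Nonempty) {k : ℕ} {w : List α} (hwZ : ∀ c ∈ w, c ∉ Y → c ∈ Z)
    (hw : w.IsChain (fun c d => c ∉ Y → d ∉ Y → c = d)) (hY : w.countP (· ∈ Y) ≤ k)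
    (hn : w.length ≤ n) : w ∈ blockWords Z Y n k := by
  induction k generalizing w with
  | zero => exact mem_powerWords_of_countP_eq_zero hZ hwZ hw (Nat.le_zero.1 hY) hn
  | succ k ih =>
    rcases hfind : w.find? (· ∈ Y) with _ | y
    · refine Finset.mem_union_left _ (mem_powerWords_of_countP_eq_zero hZ hwZ hw ?_ hn)
      exact List.countP_eq_zero.2 (List.find?_eq_none.1 hfind)
    · obtain ⟨hy, u, v, rfl, hu⟩ := List.find?_eq_some_iff_append.1 hfind
      have huY : u.countP (· ∈ Y) = 0 := List.countP_eq_zero.2 fun c hc => by simpa using hu c hc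
      simp only [List.countP_append, List.countP_cons, hy, huY, if_true] at hY
      simp only [List.length_append, List.length_cons] at hn
      have hu' : u ∈ powerWords Z n :=
        mem_powerWords_of_countP_eq_zero hZ (fun c hc => hwZ c (by simp [hc]))
          (hw.infix ⟨[], y :: v, by simp⟩) huY (by omega)
      have hv' : v ∈ blockWords Z Y n k :=
        ih (fun c hc => hwZ c (by simp [hc])) (hw.infix ⟨u ++ [y], [], by simp⟩) (by omega)
          (by omega)
      refine Finset.mem_union_right _ (Finset.mem_image.2 ⟨(u, y, v), ?_, rfl⟩)
      exact Finset.mem_product.2 ⟨hu', Finset.mem_product.2 ⟨of_decide_eq_true hy, hv'⟩⟩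

end Words

section Geodesic

variable {G : Type*} [Group G]

lemma IsGeodesicWord.mul_ne_one {X : Set G} {s t : List G} {c d : G}
    (hw : IsGeodesicWord X (s ++ c :: d :: t)) : c * d ≠ 1 := by
  intro hcd
  have hX : ∀ a ∈ s ++ t, a ∈ X := fun a ha => hw.1 a (by simp at ha ⊢; tauto)
  have hprod : (s ++ t).prod = (s ++ c :: d :: t).prod := by
    simp [List.prod_append, ← mul_assoc, hcd]
  simpa using hw.2 _ hX hprod

lemma IsGeodesicWord.isChain [DecidableEq G] {x₀ : G} {Y : Finset G} {w : List G}
    (hw : IsGeodesicWord ((insert x₀ (insert x₀⁻¹ Y) : Finset G) : Set G) w) :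
    w.IsChain (fun c d => c ∉ Y → d ∉ Y → c = d) := by
  refine List.isChain_iff_forall_rel_of_append_cons_cons.2 fun c d s t hst hcY hdY => ?_
  subst hst
  have hcd := hw.mul_ne_one
  have hc : c = x₀ ∨ c = x₀⁻¹ := by simpa [hcY] using hw.1 c (by simp)
  have hd : d = x₀ ∨ d = x₀⁻¹ := by simpa [hdY] using hw.1 d (by simp)
  rcases hc with rfl | rfl <;> rcases hd with rfl | rfl <;> simp_all

end Geodesic

theorem dominating_generator_polynomial_growth_general {G : Type*} [Group G] [DecidableEq G]
    (x₀ : G) (Y : Finset G)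
    (k : ℕ)
    (hk : ∀ w : List G,
      IsGeodesicWord ((insert x₀ (insert x₀⁻¹ Y) : Finset G) : Set G) w →
        w.countP (fun g => decide (g ∈ Y)) ≤ k) :
    ∃ C : ℕ, ∀ n : ℕ, 1 ≤ n →
      geodesicGrowth ((insert x₀ (insert x₀⁻¹ Y) : Finset G) : Set G) n ≤
        C * n ^ (k + 1) := by
  refine ⟨4 ^ (k + 1) * (Y.card + 1) ^ k, fun n hn => ?_⟩
  have hsub : {w | IsGeodesicWord ((insert x₀ (insert x₀⁻¹ Y) : Finset G) : Set G) w ∧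
      w.length ≤ n} ⊆ blockWords {x₀, x₀⁻¹} Y n k := by
    rintro w ⟨hw, hlen⟩
    refine mem_blockWords (by simp) (fun c hc hcY => ?_) hw.isChain (hk w hw) hlen
    simpa [hcY] using hw.1 c hc
  calc geodesicGrowth ((insert x₀ (insert x₀⁻¹ Y) : Finset G) : Set G) n
      ≤ (blockWords {x₀, x₀⁻¹} Y n k).card :=
        (Set.ncard_le_ncard hsub (Finset.finite_toSet _)).trans_eq (Set.ncard_coe_finset _)
    _ ≤ (2 * (n + 1)) ^ (k + 1) * (Y.card + 1) ^ k :=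
        (card_blockWords_le _ _ _ _).trans <| Nat.mul_le_mul_right _ <|
          Nat.pow_le_pow_left (Nat.mul_le_mul_right _ Finset.card_le_two) _
    _ ≤ (4 * n) ^ (k + 1) * (Y.card + 1) ^ k :=
        Nat.mul_le_mul_right _ (Nat.pow_le_pow_left (by omega) _)
    _ = 4 ^ (k + 1) * (Y.card + 1) ^ k * n ^ (k + 1) := by ring

/-- Dominating generator lemma: if every geodesic over X = {x₀, x₀⁻¹} ∪ Y contains at most
k letters from Y, then the geodesic growth is polynomial of degree k+1. -/
theorem dominating_generator_polynomial_growth {G : Type*} [Group G] [DecidableEq G]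
    (x₀ : G) (Y : Finset G) (hx : x₀ ∉ Y) (hx' : x₀⁻¹ ∉ Y)
    (hsym : ∀ g ∈ insert x₀ (insert x₀⁻¹ Y), g⁻¹ ∈ insert x₀ (insert x₀⁻¹ Y))
    (hgen : Subgroup.closure ((insert x₀ (insert x₀⁻¹ Y) : Finset G) : Set G) = ⊤)
    (k : ℕ)
    (hk : ∀ w : List G,
      IsGeodesicWord ((insert x₀ (insert x₀⁻¹ Y) : Finset G) : Set G) w →
        w.countP (fun g => decide (g ∈ Y)) ≤ k) :
    ∃ C : ℕ, ∀ n : ℕ, 1 ≤ n →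
      geodesicGrowth ((insert x₀ (insert x₀⁻¹ Y) : Finset G) : Set G) n ≤
        C * n ^ (k + 1) :=
  dominating_generator_polynomial_growth_general x₀ Y k hk
end
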